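/- arXiv:2411.06386 — 9 statements merged into one kernel-verified Lean document; each statement's English description precedes it below -/
import Mathlib

section
/- Let Z be a finite additive abelian group, let ψ : Z → ℂ be an additive character of Z, and let x ∈ Z. The set K = {y ∈ ⟨x⟩ : ψ(y) = 1} is a subgroup of the cyclic group ⟨x⟩, hence cyclic; let ᾱ be a generator of K and set r = ord(x) / ord(ᾱ). Then φ(r) · (∑_{s ∈ [x]} ψ(s)) = μ(r) · |[x]| (an identity in ℂ, with μ(r) and φ(r) cast to ℂ), where |[x]| denotes the cardinality of [x]. (This is the formula C_ψ(x) = μ(ᾱ, x) · |[x]| / φ(ᾱ, x) of the paper's main theorem.) -/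
open scoped Classical
open Finset Polynomial

section Aux

/-- Sum of all primitive `d`-th roots of unity in `ℂ` equals `μ d`. -/
lemma aux_sum_primitiveRoots (d : ℕ) (hd : 0 < d) :
    ∑ η ∈ primitiveRoots d ℂ, η = (ArithmeticFunction.moebius d : ℂ) := by
  have key : ∀ n > 0, ∑ i ∈ n.divisors, (∑ η ∈ primitiveRoots i ℂ, η) =
      (fun n : ℕ => if n = 1 then (1 : ℂ) else 0) n := by
    intro n hn
    obtain ⟨ζ, hζ⟩ : ∃ ζ : ℂ, IsPrimitiveRoot ζ n :=
      ⟨_, Complex.isPrimitiveRoot_exp n hn.ne'⟩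
    have hdisj : (↑n.divisors : Set ℕ).PairwiseDisjoint
        (fun i => primitiveRoots i ℂ) := by
      intro a _ b _ hab
      exact IsPrimitiveRoot.disjoint hab
    rw [← Finset.sum_biUnion hdisj, ← IsPrimitiveRoot.nthRoots_one_eq_biUnion_primitiveRoots]
    have himg : nthRootsFinset n (1 : ℂ) = (Finset.range n).image (ζ ^ ·) := by
      symm
      apply Finset.eq_of_subset_of_card_le
      · intro η hη
        simp only [Finset.mem_image, Finset.mem_range] at hη
        obtain ⟨i, _, rfl⟩ := hη
        rw [mem_nthRootsFinset hn, ← pow_mul, mul_comm, pow_mul, hζ.pow_eq_one, one_pow]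
      · rw [hζ.card_nthRootsFinset, Finset.card_image_of_injOn]
        · simp
        · intro i hi j hj hij
          simp only [Finset.coe_range, Set.mem_Iio] at hi hj
          exact hζ.pow_inj hi hj hij
    rw [himg, Finset.sum_image (fun i hi j hj hij => by
      simp only [Finset.coe_range, Set.mem_Iio] at hi hj
      exact hζ.pow_inj hi hj hij)]
    show ∑ x ∈ Finset.range n, ζ ^ x = if n = 1 then (1 : ℂ) else 0
    by_cases h1 : n = 1
    · subst h1; simp
    · rw [if_neg h1, hζ.geom_sum_eq_zero (by omega)]
  have := (ArithmeticFunction.sum_eq_iff_sum_mul_moebius_eq.mp key) d hd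
  rw [← this]
  rw [Finset.sum_eq_single (d, 1)]
  · simp
  · rintro ⟨a, b⟩ hab hne
    rw [Nat.mem_divisorsAntidiagonal] at hab
    have : b ≠ 1 := by
      rintro rfl
      exact hne (by simp [← hab.1])
    simp [this]
  · intro h
    exact absurd (Nat.mem_divisorsAntidiagonal.mpr ⟨mul_one d, hd.ne'⟩) h

/-- The coprime-residue power sum for a primitive `d`-th root of unity is `μ d`. -/
lemma aux_sum_coprime (d : ℕ) (hd : 0 < d) (ζ : ℂ) (h : IsPrimitiveRoot ζ d) :
    ∑ m ∈ (Finset.range d).filter d.Coprime, ζ ^ m =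
      (ArithmeticFunction.moebius d : ℂ) := by
  haveI : NeZero d := ⟨hd.ne'⟩
  rw [← aux_sum_primitiveRoots d hd]
  apply Finset.sum_bij (fun m _ => ζ ^ m)
  · intro m hm
    simp only [Finset.mem_filter, Finset.mem_range] at hm
    rw [mem_primitiveRoots hd]
    exact h.pow_of_coprime m hm.2.symm
  · intro i hi j hj hij
    simp only [Finset.mem_filter, Finset.mem_range] at hi hj
    exact h.pow_inj hi.1 hj.1 hij
  · intro ξ hξ
    rw [mem_primitiveRoots hd, h.isPrimitiveRoot_iff] at hξ
    obtain ⟨i, hi, hco, rfl⟩ := hξ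
    exact ⟨i, Finset.mem_filter.mpr ⟨Finset.mem_range.mpr hi, hco.symm⟩, rfl⟩
  · intros; rfl

/-- Sum over coprime residues equals sum over units of `ZMod n`. -/
lemma aux_sum_units (n : ℕ) [NeZero n] (ζ : ℂ) :
    ∑ m ∈ (Finset.range n).filter n.Coprime, ζ ^ m =
      ∑ u : (ZMod n)ˣ, ζ ^ ((u : ZMod n).val) := by
  apply Finset.sum_bij (fun m hm => ZMod.unitOfCoprime m
    (by simp only [Finset.mem_filter] at hm; exact hm.2.symm))
  · intros; exact Finset.mem_univ _
  · intro i hi j hj hij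
    simp only [Finset.mem_filter, Finset.mem_range] at hi hj
    have := congrArg (fun u : (ZMod n)ˣ => ((u : ZMod n).val)) hij
    simpa [ZMod.coe_unitOfCoprime, ZMod.val_natCast,
      Nat.mod_eq_of_lt hi.1, Nat.mod_eq_of_lt hj.1] using this
  · intro u _
    refine ⟨(u : ZMod n).val, Finset.mem_filter.mpr
      ⟨Finset.mem_range.mpr (ZMod.val_lt _), (ZMod.val_coe_unit_coprime u).symm⟩, ?_⟩
    apply Units.ext
    simp [ZMod.coe_unitOfCoprime, ZMod.natCast_val, ZMod.cast_id]
  · intro m hm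
    simp only [Finset.mem_filter, Finset.mem_range] at hm
    rw [ZMod.coe_unitOfCoprime, ZMod.val_natCast, Nat.mod_eq_of_lt hm.1]

/-- For a surjective homomorphism of finite groups, fibers have constant size. -/
lemma aux_card_fiber {G H : Type*} [Group G] [Group H] [Fintype G] [Fintype H]
    [DecidableEq H] (π : G →* H) (hs : Function.Surjective π) (v : H) :
    Fintype.card H * (Finset.univ.filter (fun u => π u = v)).card = Fintype.card G := by
  obtain ⟨u0, hu0⟩ := hs v
  have e : {u : G // π u = v} ≃ π.ker :=
    { toFun := fun u => ⟨u0⁻¹ * u.1, by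
        simp [MonoidHom.mem_ker, map_mul, hu0, u.2]⟩
      invFun := fun k => ⟨u0 * k.1, by
        have hk : π k.1 = 1 := k.2
        simp [map_mul, hu0, hk]⟩
      left_inv := fun u => by simp
      right_inv := fun k => by simp }
  have h1 : (Finset.univ.filter (fun u => π u = v)).card = Nat.card π.ker := by
    rw [← Fintype.card_subtype, Fintype.card_congr e, Nat.card_eq_fintype_card]
  have h2 : Nat.card G = Nat.card H * Nat.card π.ker := by
    rw [Subgroup.card_eq_card_quotient_mul_card_subgroup π.ker,
      Nat.card_congr (QuotientGroup.quotientKerEquivOfSurjective π hs).toEquiv]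
  rw [h1, ← Nat.card_eq_fintype_card, ← Nat.card_eq_fintype_card, h2]

/-- The Ramanujan-sum identity. -/
lemma aux_ramanujan (n : ℕ) (hn : 0 < n) (ζ : ℂ) (hζn : ζ ^ n = 1) :
    ((orderOf ζ).totient : ℂ) * ∑ m ∈ (Finset.range n).filter n.Coprime, ζ ^ m =
      (ArithmeticFunction.moebius (orderOf ζ) : ℂ) * (n.totient : ℂ) := by
  haveI : NeZero n := ⟨hn.ne'⟩
  set d := orderOf ζ with hdf
  have hfin : IsOfFinOrder ζ := isOfFinOrder_iff_pow_eq_one.mpr ⟨n, hn, hζn⟩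
  have hd : 0 < d := hfin.orderOf_pos
  haveI : NeZero d := ⟨hd.ne'⟩
  have hdn : d ∣ n := orderOf_dvd_of_pow_eq_one hζn
  have hprim : IsPrimitiveRoot ζ d := IsPrimitiveRoot.orderOf ζ
  set π := ZMod.unitsMap hdn with hπ
  have hsurj : Function.Surjective π := ZMod.unitsMap_surjective hdn
  have hstep2 : ∀ u : (ZMod n)ˣ, ζ ^ ((u : ZMod n).val) = ζ ^ ((π u : ZMod d).val) := by
    intro u
    have hval : ((π u : ZMod d)).val = (u : ZMod n).val % d := by
      rw [hπ, ZMod.unitsMap_def]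
      simp only [Units.coe_map, MonoidHom.coe_coe, ZMod.castHom_apply]
      rw [← ZMod.natCast_val, ZMod.val_natCast]
    rw [hval, pow_mod_orderOf]
  calc ((d.totient : ℂ)) * ∑ m ∈ (Finset.range n).filter n.Coprime, ζ ^ m
      = (d.totient : ℂ) * ∑ u : (ZMod n)ˣ, ζ ^ ((π u : ZMod d).val) := by
        rw [aux_sum_units n ζ]
        congr 1
        exact Finset.sum_congr rfl fun u _ => hstep2 u
    _ = (d.totient : ℂ) * ∑ v ∈ Finset.image π Finset.univ,
          (Finset.univ.filter (fun u => π u = v)).card • ζ ^ ((v : ZMod d).val) := by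
        rw [Finset.sum_comp (fun v : (ZMod d)ˣ => ζ ^ ((v : ZMod d).val)) π]
    _ = (n.totient : ℂ) * ∑ v : (ZMod d)ˣ, ζ ^ ((v : ZMod d).val) := by
        rw [Finset.image_univ_of_surjective hsurj, Finset.mul_sum, Finset.mul_sum]
        apply Finset.sum_congr rfl
        intro v _
        have hcard := aux_card_fiber π hsurj v
        rw [ZMod.card_units_eq_totient, ZMod.card_units_eq_totient] at hcard
        rw [nsmul_eq_mul, ← mul_assoc, ← Nat.cast_mul, hcard]
    _ = (ArithmeticFunction.moebius d : ℂ) * (n.totient : ℂ) := by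
        rw [← aux_sum_units d ζ, aux_sum_coprime d hd ζ hprim, mul_comm]

end Aux

/-- Main theorem of the paper: for an additive character `ψ` of a finite abelian group `Z`
and `x ∈ Z`, with `abar` a generator of `{y ∈ ⟨x⟩ : ψ y = 1}` and
`r = ord x / ord abar`, we have `φ(r) · ∑_{s ∈ [x]} ψ s = μ(r) · |[x]|`. -/
theorem stmt_0 {Z : Type*} [AddCommGroup Z] [Fintype Z]
    (ψ : Z → ℂ) (hψ0 : ψ 0 = 1) (hψadd : ∀ a b : Z, ψ (a + b) = ψ a * ψ b)
    (x abar : Z)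
    (hmem : abar ∈ AddSubgroup.zmultiples x) (hone : ψ abar = 1)
    (hgen : ∀ y ∈ AddSubgroup.zmultiples x, ψ y = 1 → y ∈ AddSubgroup.zmultiples abar) :
    (Nat.totient (addOrderOf x / addOrderOf abar) : ℂ) *
        ∑ s ∈ Finset.univ.filter
          (fun y : Z => AddSubgroup.zmultiples y = AddSubgroup.zmultiples x), ψ s =
      (ArithmeticFunction.moebius (addOrderOf x / addOrderOf abar) : ℂ) *
        ((Finset.univ.filter
          (fun y : Z => AddSubgroup.zmultiples y = AddSubgroup.zmultiples x)).card : ℂ) := by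
  set n := addOrderOf x with hnd
  have hn : 0 < n := addOrderOf_pos x
  set ζ := ψ x with hζd
  -- ψ of natural multiples
  have hpow : ∀ (m : ℕ) (z : Z), ψ (m • z) = ψ z ^ m := by
    intro m z
    induction m with
    | zero => simpa using hψ0
    | succ k ih => rw [succ_nsmul, hψadd, ih, pow_succ]
  have hζn : ζ ^ n = 1 := by
    rw [← hpow, hnd, addOrderOf_nsmul_eq_zero, hψ0]
  have hfin : IsOfFinOrder ζ := isOfFinOrder_iff_pow_eq_one.mpr ⟨n, hn, hζn⟩
  set d := orderOf ζ with hdd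
  have hd : 0 < d := hfin.orderOf_pos
  have hdn : d ∣ n := orderOf_dvd_of_pow_eq_one hζn
  -- reduction of integer multiples to natural multiples below n
  have hred : ∀ y ∈ AddSubgroup.zmultiples x, ∃ m : ℕ, m < n ∧ m • x = y := by
    intro y hy
    obtain ⟨k, hk⟩ := AddSubgroup.mem_zmultiples_iff.mp hy
    refine ⟨(k % n).toNat, ?_, ?_⟩
    · have h1 : k % (n : ℤ) < n := Int.emod_lt_of_pos k (by exact_mod_cast hn)
      omega
    · have h0 : (0 : ℤ) ≤ k % n := Int.emod_nonneg k (by exact_mod_cast hn.ne')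
      have : ((k % (n : ℤ)).toNat : ℤ) • x = (k % (n : ℤ)) • x := by
        rw [Int.toNat_of_nonneg h0]
      rw [← hk, ← natCast_zsmul, this]
      conv_rhs => rw [← Int.mul_ediv_add_emod k n]
      rw [add_zsmul, mul_comm, mul_zsmul, natCast_zsmul, hnd,
        addOrderOf_nsmul_eq_zero, zsmul_zero, zero_add]
  -- order of abar is n / d
  have habar : AddSubgroup.zmultiples abar = AddSubgroup.zmultiples ((d • x : Z)) := by
    apply le_antisymm
    · rw [AddSubgroup.zmultiples_le]
      obtain ⟨m, hmn, hmx⟩ := hred abar hmem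
      have hζm : ζ ^ m = 1 := by rw [← hpow]; rw [hmx, hone]
      obtain ⟨j, hj⟩ := orderOf_dvd_of_pow_eq_one hζm
      refine ⟨(j : ℤ), ?_⟩
      show (j : ℤ) • (d • x) = abar
      have hjd : m = d * j := hj
      rw [natCast_zsmul, ← mul_nsmul, ← hjd, hmx]
    · rw [AddSubgroup.zmultiples_le]
      apply hgen
      · exact ⟨(d : ℤ), by show (d : ℤ) • x = d • x; rw [natCast_zsmul]⟩
      · rw [hpow]
        exact pow_orderOf_eq_one (ψ x)
  have hordabar : addOrderOf abar = n / d := by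
    have h1 : addOrderOf abar = addOrderOf (d • x) := by
      rw [← Nat.card_zmultiples, ← Nat.card_zmultiples, habar]
    rw [h1, addOrderOf_nsmul, ← hnd, Nat.gcd_eq_right hdn]
  have hr : n / addOrderOf abar = d := by
    rw [hordabar, Nat.div_div_self hdn hn.ne']
  -- the generator set as an image
  have himage : Finset.univ.filter
      (fun y : Z => AddSubgroup.zmultiples y = AddSubgroup.zmultiples x) =
      ((Finset.range n).filter n.Coprime).image (fun m => m • x) := by
    ext y
    simp only [Finset.mem_filter, Finset.mem_univ, true_and, Finset.mem_image,
      Finset.mem_range]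
    constructor
    · intro hy
      have hyx : y ∈ AddSubgroup.zmultiples x := by
        rw [← hy]; exact AddSubgroup.mem_zmultiples y
      obtain ⟨m, hmn, hmx⟩ := hred y hyx
      refine ⟨m, ⟨hmn, ?_⟩, hmx⟩
      have hord : addOrderOf y = n := by
        rw [hnd, ← Nat.card_zmultiples, ← Nat.card_zmultiples, hy]
      rw [← hmx, addOrderOf_nsmul, ← hnd] at hord
      have hgcd : n.gcd m ∣ n := Nat.gcd_dvd_left n m
      rcases (Nat.div_eq_self.mp hord) with h | h
      · omega
      · exact h
    · rintro ⟨m, ⟨hmn, hco⟩, rfl⟩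
      apply le_antisymm
      · rw [AddSubgroup.zmultiples_le]
        exact ⟨(m : ℤ), by show (m : ℤ) • x = m • x; rw [natCast_zsmul]⟩
      · rw [AddSubgroup.zmultiples_le]
        -- Bezout: x ∈ zmultiples (m • x)
        have hb : ((n.gcd m : ℤ)) = n * Nat.gcdA n m + m * Nat.gcdB n m :=
          Nat.gcd_eq_gcd_ab n m
        rw [hco] at hb
        have hx0 : (n : ℤ) • x = 0 := by
          rw [natCast_zsmul]
          exact addOrderOf_nsmul_eq_zero x
        have key : ∀ a b : ℤ, ((n : ℤ) * a + (m : ℤ) * b) • x = b • ((m : ℤ) • x) := by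
          intro a b
          rw [add_zsmul, mul_comm ((n : ℤ)), mul_zsmul, hx0, zsmul_zero, zero_add,
            mul_comm ((m : ℤ)), mul_zsmul]
        refine ⟨Nat.gcdB n m, ?_⟩
        show (Nat.gcdB n m) • (m • x) = x
        calc (Nat.gcdB n m) • (m • x) = (Nat.gcdB n m) • ((m : ℤ) • x) := by
              rw [natCast_zsmul]
          _ = ((n : ℤ) * Nat.gcdA n m + (m : ℤ) * Nat.gcdB n m) • x := (key _ _).symm
          _ = (((1 : ℕ) : ℤ)) • x := by rw [← hb]
          _ = x := by simp
  have hinj : Set.InjOn (fun m : ℕ => m • x) ↑((Finset.range n).filter n.Coprime) := by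
    intro i hi j hj hij
    simp only [Finset.coe_filter, Set.mem_setOf_eq, Finset.mem_range] at hi hj
    exact nsmul_injOn_Iio_addOrderOf (by exact hi.1) (by exact hj.1) hij
  have hsum : ∑ s ∈ Finset.univ.filter
      (fun y : Z => AddSubgroup.zmultiples y = AddSubgroup.zmultiples x), ψ s =
      ∑ m ∈ (Finset.range n).filter n.Coprime, ζ ^ m := by
    rw [himage, Finset.sum_image hinj]
    exact Finset.sum_congr rfl fun m _ => hpow m x
  have hcard : (Finset.univ.filter
      (fun y : Z => AddSubgroup.zmultiples y = AddSubgroup.zmultiples x)).card =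
      n.totient := by
    rw [himage, Finset.card_image_of_injOn hinj]
    rfl
  rw [hr, hsum, hcard, hdd]
  exact aux_ramanujan n hn ζ hζn
end

section
/- Let Z be a finite additive abelian group, α ∈ Z with additive order m, and x ∈ ⟨α⟩. Then ∑_{d ∣ m, x ∈ ⟨d•α⟩} μ((m/d) / ord(x)) equals 1 if ⟨x⟩ = ⟨α⟩ and equals 0 otherwise, where the sum runs over the positive divisors d of m such that x lies in the cyclic subgroup generated by d•α, μ is the classical Möbius function, and ord(x) is the additive order of x (note ord(d•α) = m/d). -/
/-! For `d ∣ m = ord α`, the subgroup `⟨d • α⟩` of the cyclic group `⟨α⟩` has order `m / d`, so it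
contains `x` iff `ord x ∣ m / d`, i.e. iff `d ∣ n := m / ord x`. The sum is therefore
`∑_{d ∣ n} μ(n / d)`, which is `1` exactly when `n = 1`, that is, when `x` generates `⟨α⟩`. -/

open scoped Classical

open ArithmeticFunction
open scoped ArithmeticFunction.Moebius

theorem ArithmeticFunction.sum_divisors_moebius (n : ℕ) :
    ∑ d ∈ n.divisors, μ d = if n = 1 then 1 else 0 := by
  rw [← coe_mul_zeta_apply, moebius_mul_coe_zeta, one_apply]

theorem Nat.dvd_div_iff_dvd_div {m r d : ℕ} (hr : r ∣ m) (hd : d ∣ m) :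
    r ∣ m / d ↔ d ∣ m / r := by
  rw [Nat.dvd_div_iff_mul_dvd hd, Nat.dvd_div_iff_mul_dvd hr, mul_comm]

namespace AddSubgroup

variable {G : Type*} [AddGroup G] {α x : G}

theorem mem_zmultiples_nsmul_iff (hα : IsOfFinAddOrder α) (hx : x ∈ zmultiples α) {d : ℕ}
    (hd : d ∣ addOrderOf α) : x ∈ zmultiples (d • α) ↔ addOrderOf x ∣ addOrderOf α / d := by
  have hd0 : d ≠ 0 := by
    rintro rfl
    exact hα.addOrderOf_pos.ne' (zero_dvd_iff.mp hd)
  constructor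
  · intro h
    rw [← addOrderOf_nsmul_of_dvd hd0 hd]
    exact addOrderOf_dvd_of_mem_zmultiples h
  · intro h
    obtain ⟨k, rfl⟩ := mem_zmultiples_iff.mp hx
    have hq : addOrderOf α / d ≠ 0 :=
      (Nat.div_pos (Nat.le_of_dvd hα.addOrderOf_pos hd) (Nat.pos_of_ne_zero hd0)).ne'
    have hkill : ((addOrderOf α / d : ℕ) * k : ℤ) • α = 0 := by
      rw [mul_zsmul, natCast_zsmul, addOrderOf_dvd_iff_nsmul_eq_zero.mp h]
    obtain ⟨j, rfl⟩ : (d : ℤ) ∣ k := by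
      rw [← addOrderOf_dvd_iff_zsmul_eq_zero] at hkill
      nth_rw 1 [← Nat.div_mul_cancel hd] at hkill
      push_cast at hkill
      exact (mul_dvd_mul_iff_left (by exact_mod_cast hq)).mp hkill
    exact mem_zmultiples_iff.mpr ⟨j, by rw [mul_comm, mul_zsmul, natCast_zsmul]⟩

theorem zmultiples_eq_zmultiples_iff_addOrderOf_eq (hα : IsOfFinAddOrder α)
    (hx : x ∈ zmultiples α) :
    zmultiples x = zmultiples α ↔ addOrderOf x = addOrderOf α := by
  refine ⟨fun h => by rw [← Nat.card_zmultiples, h, Nat.card_zmultiples], fun h => ?_⟩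
  have := hα.finite_zmultiples.to_subtype
  exact eq_of_le_of_card_ge (zmultiples_le.mpr hx) (by simp only [Nat.card_zmultiples, h, le_refl])

theorem filter_divisors_mem_zmultiples_nsmul (hα : IsOfFinAddOrder α) (hx : x ∈ zmultiples α) :
    (addOrderOf α).divisors.filter (fun d => x ∈ zmultiples (d • α)) =
      (addOrderOf α / addOrderOf x).divisors := by
  have hord := addOrderOf_dvd_of_mem_zmultiples hx
  rw [← Nat.divisors_filter_dvd_of_dvd hα.addOrderOf_pos.ne' (Nat.div_dvd_of_dvd hord)]
  refine Finset.filter_congr fun d hd => ?_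
  have hdm := Nat.dvd_of_mem_divisors hd
  rw [mem_zmultiples_nsmul_iff hα hx hdm, Nat.dvd_div_iff_dvd_div hord hdm]

end AddSubgroup

/-- Lemma 2.1(ii): for `α ∈ Z` of additive order `m` and `x ∈ ⟨α⟩`,
`∑_{d ∣ m, x ∈ ⟨d•α⟩} μ((m/d) / ord x)` is `1` if `⟨x⟩ = ⟨α⟩` and `0` otherwise. -/
theorem stmt_2 {Z : Type*} [AddCommGroup Z] [Fintype Z] (α x : Z)
    (hx : x ∈ AddSubgroup.zmultiples α) :
    ∑ d ∈ (addOrderOf α).divisors.filter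
        (fun d => x ∈ AddSubgroup.zmultiples (d • α)),
        ArithmeticFunction.moebius ((addOrderOf α / d) / addOrderOf x) =
      if AddSubgroup.zmultiples x = AddSubgroup.zmultiples α then 1 else 0 := by
  have hα : IsOfFinAddOrder α := isOfFinAddOrder_of_finite α
  have hord : addOrderOf x ∣ addOrderOf α := addOrderOf_dvd_of_mem_zmultiples hx
  simp_rw [AddSubgroup.filter_divisors_mem_zmultiples_nsmul hα hx,
    Nat.div_right_comm _ _ (addOrderOf x)]
  rw [Nat.sum_div_divisors _ μ, sum_divisors_moebius]
  refine if_congr ?_ rfl rfl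
  rw [AddSubgroup.zmultiples_eq_zmultiples_iff_addOrderOf_eq hα hx,
    Nat.div_eq_iff_eq_mul_left (addOrderOf_pos x) hord, one_mul, eq_comm]
end

section
/- Let Z be a finite additive abelian group and f, g : Z → ℂ. Then (for all x ∈ Z, f(x) = ∑_{d ∣ ord(x)} g(d•x)) if and only if (for all x ∈ Z, g(x) = ∑_{d ∣ ord(x)} μ(d) · f(d•x)), where both sums run over the positive divisors d of the additive order ord(x) of x, and μ is the classical Möbius function. -/
open ArithmeticFunction Finset
open scoped ArithmeticFunction.Moebius

private lemma key {Z : Type*} [AddCommGroup Z] [Fintype Z] (f g : Z → ℂ) (x : Z) :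
    (∀ n > 0, n ∈ {k | k ∣ addOrderOf x} →
        (∑ i ∈ n.divisors, g ((addOrderOf x / i) • x)) = f ((addOrderOf x / n) • x)) ↔
      ∀ n > 0, n ∈ {k | k ∣ addOrderOf x} →
        (∑ p ∈ n.divisorsAntidiagonal, μ p.1 • f ((addOrderOf x / p.2) • x))
          = g ((addOrderOf x / n) • x) :=
  sum_eq_iff_sum_smul_moebius_eq_on {k | k ∣ addOrderOf x}
    (fun _ _ hmn hn => hmn.trans hn)

private lemma divdiv {n m e : ℕ} (hn : n ≠ 0) (hmn : m ∣ n) (hem : e ∣ m) (hm : 0 < m) :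
    n / (m / e) = e * (n / m) := by
  have he : 0 < e := Nat.pos_of_dvd_of_pos hem hm
  refine Nat.div_eq_of_eq_mul_left (Nat.div_pos (Nat.le_of_dvd hm hem) he) ?_
  rw [mul_comm e, mul_assoc, mul_comm e, Nat.div_mul_cancel hem, Nat.div_mul_cancel hmn]

/-- Theorem 2.2 (analogue of the Möbius inversion formula): for `f, g : Z → ℂ`,
`f(x) = ∑_{d ∣ ord x} g(d•x)` for all `x` iff `g(x) = ∑_{d ∣ ord x} μ(d)·f(d•x)` for all `x`. -/
theorem stmt_3 {Z : Type*} [AddCommGroup Z] [Fintype Z] (f g : Z → ℂ) :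
    (∀ x : Z, f x = ∑ d ∈ (addOrderOf x).divisors, g (d • x)) ↔
      (∀ x : Z, g x = ∑ d ∈ (addOrderOf x).divisors,
        (ArithmeticFunction.moebius d : ℂ) * f (d • x)) := by
  constructor
  · intro h x
    set n := addOrderOf x with hn
    have hn0 : n ≠ 0 := (addOrderOf_pos x).ne'
    have := (key f g x).mp ?_ n (addOrderOf_pos x) dvd_rfl
    · rw [Nat.div_self (addOrderOf_pos x), one_smul] at this
      rw [← this, Nat.sum_divisorsAntidiagonal (fun a b => μ a • f ((n / b) • x))]
      refine Finset.sum_congr rfl fun d hd => ?_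
      rw [Nat.div_div_self (Nat.dvd_of_mem_divisors hd) hn0, zsmul_eq_mul]
    · intro m hm hmn
      have hord : addOrderOf ((n / m) • x) = m :=
        addOrderOf_nsmul_addOrderOf_sub hn0 hmn
      rw [h ((n / m) • x), hord,
        ← Nat.sum_div_divisors m (fun i => g ((n / i) • x))]
      refine Finset.sum_congr rfl fun e he => ?_
      rw [smul_smul, divdiv hn0 hmn (Nat.dvd_of_mem_divisors he) hm]
  · intro h x
    set n := addOrderOf x with hn
    have hn0 : n ≠ 0 := (addOrderOf_pos x).ne'
    have := (key f g x).mpr ?_ n (addOrderOf_pos x) dvd_rfl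
    · rw [Nat.div_self (addOrderOf_pos x), one_smul] at this
      rw [← this, ← Nat.sum_div_divisors n (fun d => g (d • x))]
    · intro m hm hmn
      have hord : addOrderOf ((n / m) • x) = m :=
        addOrderOf_nsmul_addOrderOf_sub hn0 hmn
      rw [h ((n / m) • x), hord,
        Nat.sum_divisorsAntidiagonal (fun a b => μ a • f ((n / b) • x))]
      refine Finset.sum_congr rfl fun e he => ?_
      rw [smul_smul, zsmul_eq_mul, divdiv hn0 hmn (Nat.dvd_of_mem_divisors he) hm]
end

section
/- Let Z be a finite additive abelian group, ψ : Z → ℂ an additive character, and x ∈ Z with additive order m. Then ∑_{s ∈ [x]} ψ(s) = ∑_{d} μ(d) · (m/d), where the right-hand sum runs over those positive divisors d of m for which ψ(z) = 1 for every z in the cyclic subgroup ⟨d•x⟩, and μ is the classical Möbius function (cast into ℂ). -/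
open scoped Classical

open Finset

section helpers
variable {Z : Type*} [AddCommGroup Z] [Fintype Z]

lemma sum_range_smul_aux (w : Z) (f : Z → ℂ) :
    ∑ j ∈ range (addOrderOf w), f (j • w) = ∑ t : (AddSubgroup.zmultiples w), f ↑t := by
  rw [← Fin.sum_univ_eq_sum_range (fun j => f (j • w)) (addOrderOf w)]
  exact Fintype.sum_equiv (finEquivZMultiples (isOfFinAddOrder_of_finite w))
    (fun j => f ((j : ℕ) • w)) (fun t => f ↑t) (fun j => rfl)

lemma subgroup_char_sum (ψ : Z → ℂ) (hψadd : ∀ a b : Z, ψ (a + b) = ψ a * ψ b)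
    (H : AddSubgroup Z) :
    ∑ t : H, ψ ↑t = if ∀ z ∈ H, ψ z = 1 then (Nat.card H : ℂ) else 0 := by
  split_ifs with h
  · calc ∑ t : H, ψ ↑t = ∑ _t : H, (1:ℂ) :=
        Finset.sum_congr rfl (fun (t : H) _ => h (t : Z) t.2)
      _ = (Nat.card H : ℂ) := by simp [Nat.card_eq_fintype_card]
  · push_neg at h
    obtain ⟨z, hz, hz1⟩ := h
    have key : ψ z * ∑ t : H, ψ ↑t = ∑ t : H, ψ ↑t := by
      rw [Finset.mul_sum]
      simp_rw [← hψadd]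
      exact Fintype.sum_equiv (Equiv.addLeft (⟨z, hz⟩ : H))
        (fun t => ψ (z + ↑t)) (fun t => ψ ↑t) (fun t => rfl)
    have h2 : (ψ z - 1) * ∑ t : H, ψ ↑t = 0 := by linear_combination key
    rcases mul_eq_zero.mp h2 with h3 | h3
    · exact absurd (sub_eq_zero.mp h3) hz1
    · exact h3

lemma gen_iff (x y : Z) : AddSubgroup.zmultiples y = AddSubgroup.zmultiples x ↔
    y ∈ AddSubgroup.zmultiples x ∧ addOrderOf y = addOrderOf x := by
  constructor
  · intro h
    refine ⟨h ▸ AddSubgroup.mem_zmultiples y, ?_⟩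
    rw [← Nat.card_zmultiples y, ← Nat.card_zmultiples x, h]
  · rintro ⟨hmem, hord⟩
    refine AddSubgroup.eq_of_le_of_card_ge (AddSubgroup.zmultiples_le.mpr hmem) ?_
    rw [Nat.card_zmultiples, Nat.card_zmultiples, hord]

end helpers

/-- Equation (5) of the paper: `∑_{s ∈ [x]} ψ s = ∑_d μ(d) · (m/d)`, the sum over those
divisors `d` of `m = ord x` with `ψ ≡ 1` on `⟨d•x⟩`. -/
theorem stmt_6 {Z : Type*} [AddCommGroup Z] [Fintype Z]
    (ψ : Z → ℂ) (hψ0 : ψ 0 = 1) (hψadd : ∀ a b : Z, ψ (a + b) = ψ a * ψ b) (x : Z) :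
    ∑ s ∈ Finset.univ.filter
        (fun y : Z => AddSubgroup.zmultiples y = AddSubgroup.zmultiples x), ψ s =
      ∑ d ∈ (addOrderOf x).divisors.filter
          (fun d => ∀ z ∈ AddSubgroup.zmultiples (d • x), ψ z = 1),
        (ArithmeticFunction.moebius d : ℂ) * ((addOrderOf x / d : ℕ) : ℂ) := by
  set m := addOrderOf x with hmdef
  have hm : 0 < m := addOrderOf_pos x
  have hord : ∀ k : ℕ, addOrderOf (k • x) = m / m.gcd k := fun k => addOrderOf_nsmul x
  -- coprime k gives generator
  have hgen : ∀ k : ℕ, m.gcd k = 1 → AddSubgroup.zmultiples (k • x) = AddSubgroup.zmultiples x := by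
    intro k hk
    rw [gen_iff]
    exact ⟨AddSubgroup.nsmul_mem _ (AddSubgroup.mem_zmultiples x) k,
      by rw [hord k, hk, Nat.div_one]⟩
  -- Step A : generators ↔ coprime residues
  have stepA : ∑ s ∈ Finset.univ.filter
        (fun y : Z => AddSubgroup.zmultiples y = AddSubgroup.zmultiples x), ψ s
      = ∑ k ∈ (range m).filter (fun k => m.gcd k = 1), ψ (k • x) := by
    refine (Finset.sum_bij (fun k _ => k • x) ?_ ?_ ?_ ?_).symm
    · intro k hk
      simp only [mem_filter, mem_range] at hk ⊢
      exact ⟨mem_univ _, hgen k hk.2⟩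
    · intro a ha b hb hab
      simp only [mem_filter, mem_range] at ha hb
      exact nsmul_injOn_Iio_addOrderOf ha.1 hb.1 hab
    · intro y hy
      simp only [mem_filter, mem_univ, true_and] at hy
      rw [gen_iff] at hy
      obtain ⟨⟨k, hk⟩, hordy⟩ := hy
      refine ⟨(k % (m : ℤ)).toNat, ?_, ?_⟩
      · have hk' : ((k % (m : ℤ)).toNat : ℕ) • x = y := by
          have h1 : (((k % (m : ℤ)).toNat : ℤ)) • x = (k % (m : ℤ)) • x := by
            rw [Int.toNat_of_nonneg (Int.emod_nonneg k (by exact_mod_cast hm.ne'))]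
          have h2 : (k % (m : ℤ)) • x = k • x := mod_addOrderOf_zsmul x k
          rw [← natCast_zsmul, h1, h2]; exact hk
        have hlt : (k % (m : ℤ)).toNat < m := by
          have := Int.emod_lt_of_pos k (by exact_mod_cast hm : (0:ℤ) < (m:ℤ))
          omega
        have hgcd : m.gcd (k % (m : ℤ)).toNat = 1 := by
          have h3 : addOrderOf (((k % (m : ℤ)).toNat : ℕ) • x) = m := by rw [hk', hordy]
          rw [hord] at h3
          have hdvd : m.gcd (k % (m : ℤ)).toNat ∣ m := Nat.gcd_dvd_left _ _
          rcases (Nat.div_eq_self.mp h3) with h | h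
          · exact absurd h hm.ne'
          · exact h
        simp only [mem_filter, mem_range]
        exact ⟨hlt, hgcd⟩
      · show ((k % (m : ℤ)).toNat) • x = y
        have h1 : (((k % (m : ℤ)).toNat : ℤ)) • x = (k % (m : ℤ)) • x := by
          rw [Int.toNat_of_nonneg (Int.emod_nonneg k (by exact_mod_cast hm.ne'))]
        have h2 : (k % (m : ℤ)) • x = k • x := mod_addOrderOf_zsmul x k
        rw [← natCast_zsmul, h1, h2]; exact hk
    · intro k hk
      rfl
  rw [stepA]
  -- Step B : Möbius indicator
  have hdivisors : ∀ k : ℕ, (m.gcd k).divisors = m.divisors.filter (· ∣ k) := by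
    intro k
    ext d
    simp only [Nat.mem_divisors, mem_filter, Nat.dvd_gcd_iff]
    constructor
    · rintro ⟨⟨h1, h2⟩, _⟩; exact ⟨⟨h1, hm.ne'⟩, h2⟩
    · rintro ⟨⟨h1, _⟩, h2⟩
      exact ⟨⟨h1, h2⟩, Nat.gcd_ne_zero_left hm.ne'⟩
  have hmu : ∀ k : ℕ, ∑ d ∈ m.divisors.filter (· ∣ k), ((ArithmeticFunction.moebius d : ℤ) : ℂ)
      = if m.gcd k = 1 then 1 else 0 := by
    intro k
    rw [← hdivisors]
    have h1 : ∑ d ∈ (m.gcd k).divisors, (ArithmeticFunction.moebius d) =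
        if m.gcd k = 1 then 1 else 0 := by
      rw [← ArithmeticFunction.coe_mul_zeta_apply, ArithmeticFunction.moebius_mul_coe_zeta,
        ArithmeticFunction.one_apply]
    calc ∑ d ∈ (m.gcd k).divisors, ((ArithmeticFunction.moebius d : ℤ) : ℂ)
        = (((∑ d ∈ (m.gcd k).divisors, ArithmeticFunction.moebius d) : ℤ) : ℂ) := by
          push_cast; ring
      _ = _ := by rw [h1]; split <;> simp
  -- expand indicator and swap sums
  calc ∑ k ∈ (range m).filter (fun k => m.gcd k = 1), ψ (k • x)
      = ∑ k ∈ range m, (if m.gcd k = 1 then (1:ℂ) else 0) * ψ (k • x) := by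
        rw [Finset.sum_filter]
        exact Finset.sum_congr rfl fun k _ => by split <;> simp
    _ = ∑ k ∈ range m, ∑ d ∈ m.divisors.filter (· ∣ k),
          ((ArithmeticFunction.moebius d : ℤ) : ℂ) * ψ (k • x) := by
        refine Finset.sum_congr rfl fun k _ => ?_
        rw [← hmu k, Finset.sum_mul]
    _ = ∑ k ∈ range m, ∑ d ∈ m.divisors,
          if d ∣ k then ((ArithmeticFunction.moebius d : ℤ) : ℂ) * ψ (k • x) else 0 := by
        refine Finset.sum_congr rfl fun k _ => ?_
        rw [Finset.sum_filter]
    _ = ∑ d ∈ m.divisors, ((ArithmeticFunction.moebius d : ℤ) : ℂ) *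
          ∑ k ∈ (range m).filter (fun k => d ∣ k), ψ (k • x) := by
        rw [Finset.sum_comm]
        refine Finset.sum_congr rfl fun d _ => ?_
        rw [Finset.mul_sum, Finset.sum_filter]
    _ = ∑ d ∈ m.divisors, ((ArithmeticFunction.moebius d : ℤ) : ℂ) *
          (if ∀ z ∈ AddSubgroup.zmultiples (d • x), ψ z = 1 then ((m / d : ℕ) : ℂ) else 0) := by
        refine Finset.sum_congr rfl fun d hd => ?_
        obtain ⟨hdvd, _⟩ := Nat.mem_divisors.mp hd
        have hd0 : 0 < d := Nat.pos_of_dvd_of_pos hdvd hm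
        congr 1
        have hinner : ∑ k ∈ (range m).filter (fun k => d ∣ k), ψ (k • x)
            = ∑ j ∈ range (m / d), ψ (j • (d • x)) := by
          refine Finset.sum_nbij' (i := fun k => k / d) (j := fun j => d * j) ?_ ?_ ?_ ?_ ?_
          · intro k hk
            simp only [mem_filter, mem_range] at hk ⊢
            exact Nat.div_lt_div_of_lt_of_dvd hdvd hk.1
          · intro j hj
            simp only [mem_filter, mem_range] at hj ⊢
            constructor
            · calc d * j < d * (m / d) := (Nat.mul_lt_mul_left hd0).mpr hj
                _ = m := Nat.mul_div_cancel' hdvd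
            · exact Dvd.intro j rfl
          · intro k hk
            simp only [mem_filter, mem_range] at hk
            exact Nat.mul_div_cancel' hk.2
          · intro j _
            exact Nat.mul_div_cancel_left j hd0
          · intro k hk
            simp only [mem_filter, mem_range] at hk
            obtain ⟨c, rfl⟩ := hk.2
            show ψ ((d * c) • x) = ψ ((d * c / d) • (d • x))
            rw [Nat.mul_div_cancel_left c hd0, mul_comm d c, mul_smul]
        have horder : addOrderOf (d • x) = m / d := by
          rw [hord d, Nat.gcd_eq_right hdvd]
        rw [hinner, ← horder, sum_range_smul_aux (d • x) ψ,
          subgroup_char_sum ψ hψadd (AddSubgroup.zmultiples (d • x)), Nat.card_zmultiples, horder]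
    _ = _ := by
        rw [Finset.sum_filter]
        refine Finset.sum_congr rfl fun d _ => ?_
        split <;> simp
end

section
/- Let ι be a finite index type, p : ι → ℕ with each p(i) prime, a : ι → ℕ with each a(i) ≥ 1, and let Z be the product group ∏_{i ∈ ι} ℤ/(p(i)^{a(i)}). Let y ∈ Z and x ∈ ⟨y⟩. Then μ(ord(y) / ord(x)) ≠ 0 if and only if for every i ∈ ι, ord(y_i) divides p(i) · ord(x_i), where μ is the classical Möbius function, ord denotes additive order, and x_i, y_i are the i-th coordinates. (Equivalently: in each coordinate, the additive order of y_i is either ord(x_i) or p(i) · ord(x_i).) -/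
/-!
Write `x = n • y`. For an element of finite order, `ord y / ord (n • y) = gcd (ord y, n)`, both
globally and in each coordinate. As `ord y` is the lcm of the coordinate orders, the global gcd
is the lcm of the coordinate gcds `gcd (ord (y i), n)`, and an lcm is squarefree iff each term is.
Finally `gcd (ord (y i), n)` divides a power of `p i`, so it is squarefree iff it divides `p i`.
-/

@[to_additive]
theorem orderOf_pi {ι : Type*} [Fintype ι] {M : ι → Type*} [∀ i, Monoid (M i)] (x : ∀ i, M i) :
    orderOf x = Finset.univ.lcm fun i ↦ orderOf (x i) := by
  refine Nat.dvd_antisymm (orderOf_dvd_of_pow_eq_one ?_) (Finset.lcm_dvd fun i _ ↦ ?_)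
  · funext i
    exact orderOf_dvd_iff_pow_eq_one.1 (Finset.dvd_lcm (Finset.mem_univ i))
  · exact orderOf_dvd_of_pow_eq_one (congrFun (pow_orderOf_eq_one x) i)

theorem IsOfFinAddOrder.addOrderOf_div_addOrderOf_nsmul {G : Type*} [AddMonoid G] {y : G}
    (hy : IsOfFinAddOrder y) (n : ℕ) :
    addOrderOf y / addOrderOf (n • y) = (addOrderOf y).gcd n := by
  rw [hy.addOrderOf_nsmul, Nat.div_div_self (Nat.gcd_dvd_left _ _) hy.addOrderOf_pos.ne']

namespace Nat

theorem gcd_finset_lcm {ι : Type*} {s : Finset ι} {f : ι → ℕ} (hf : ∀ i ∈ s, f i ≠ 0) (n : ℕ) :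
    (s.lcm f).gcd n = s.lcm fun i ↦ (f i).gcd n := by
  rcases eq_or_ne n 0 with rfl | hn
  · simp
  have hlcm : s.lcm f ≠ 0 := by simpa [Finset.lcm_eq_zero_iff] using hf
  have hgcd : ∀ i ∈ s, (f i).gcd n ≠ 0 := fun i _ ↦ gcd_ne_zero_right hn
  refine eq_of_factorization_eq (gcd_ne_zero_right hn) ?_ fun q ↦ ?_
  · simpa [Finset.lcm_eq_zero_iff] using hgcd
  rw [factorization_gcd hlcm hn, Finsupp.inf_apply, Finset.factorization_lcm hf,
    Finset.factorization_lcm hgcd, Finset.sup_inf_distrib_right]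
  refine Finset.sup_congr rfl fun i hi ↦ ?_
  rw [factorization_gcd (hf i hi) hn, Finsupp.inf_apply]

theorem squarefree_finset_lcm_iff {ι : Type*} {s : Finset ι} {f : ι → ℕ}
    (hf : ∀ i ∈ s, f i ≠ 0) : Squarefree (s.lcm f) ↔ ∀ i ∈ s, Squarefree (f i) := by
  have hlcm : s.lcm f ≠ 0 := by simpa [Finset.lcm_eq_zero_iff] using hf
  rw [squarefree_iff_factorization_le_one hlcm]
  simp only [Finset.factorization_lcm hf, Finset.sup_le_iff]
  exact ⟨fun h i hi ↦ (squarefree_iff_factorization_le_one (hf i hi)).2 fun q ↦ h q i hi,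
    fun h q i hi ↦ (squarefree_iff_factorization_le_one (hf i hi)).1 (h i hi) q⟩

theorem squarefree_iff_dvd_of_dvd_prime_pow {p d e : ℕ} (hp : p.Prime) (hd : d ∣ p ^ e) :
    Squarefree d ↔ d ∣ p := by
  obtain ⟨j, -, rfl⟩ := (dvd_prime_pow hp).1 hd
  rcases j with _ | j
  · simp
  have hdvd := pow_dvd_pow_iff_le_right (x := p) (k := j + 1) (l := 1) hp.one_lt
  rw [pow_one] at hdvd
  rw [squarefree_pow_iff hp.ne_one j.succ_ne_zero, hdvd]
  simp [hp.squarefree]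

end Nat

theorem ZMod.addOrderOf_dvd {n : ℕ} (z : ZMod n) : addOrderOf z ∣ n :=
  addOrderOf_dvd_of_nsmul_eq_zero (by simp)

theorem stmt_7_general {ι : Type*} [Fintype ι] (p a : ι → ℕ)
    (hp : ∀ i, (p i).Prime)
    (y x : (i : ι) → ZMod (p i ^ a i))
    (hx : x ∈ AddSubgroup.zmultiples y) :
    ArithmeticFunction.moebius (addOrderOf y / addOrderOf x) ≠ 0 ↔
      ∀ i, addOrderOf (y i) ∣ p i * addOrderOf (x i) := by
  have : ∀ i, NeZero (p i ^ a i) := fun i ↦ ⟨pow_ne_zero _ (hp i).ne_zero⟩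
  have hy : IsOfFinAddOrder y := isOfFinAddOrder_of_finite y
  have hyi : ∀ i, IsOfFinAddOrder (y i) := fun i ↦ isOfFinAddOrder_of_finite (y i)
  obtain ⟨n, rfl⟩ : ∃ n : ℕ, n • y = x := hy.mem_multiples_iff_mem_zmultiples.2 hx
  have hy0 : ∀ i ∈ Finset.univ, addOrderOf (y i) ≠ 0 := fun i _ ↦ (hyi i).addOrderOf_pos.ne'
  rw [ArithmeticFunction.moebius_ne_zero_iff_squarefree, hy.addOrderOf_div_addOrderOf_nsmul,
    addOrderOf_pi, Nat.gcd_finset_lcm hy0,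
    Nat.squarefree_finset_lcm_iff fun i _ ↦ Nat.gcd_ne_zero_left (hy0 i (Finset.mem_univ i))]
  refine forall_congr' fun i ↦ ?_
  simp only [Finset.mem_univ, forall_const]
  rw [Pi.smul_apply, mul_comm, ← Nat.div_dvd_iff_dvd_mul (addOrderOf_smul_dvd n)
    ((hyi i).nsmul.addOrderOf_pos), (hyi i).addOrderOf_div_addOrderOf_nsmul,
    Nat.squarefree_iff_dvd_of_dvd_prime_pow (hp i)
      ((Nat.gcd_dvd_left _ _).trans (ZMod.addOrderOf_dvd _))]

/-- Lemma 3.1: in `Z = ∏ i, ℤ/(p i ^ a i)` with `x ∈ ⟨y⟩`,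
`μ(ord y / ord x) ≠ 0` iff in each coordinate `ord (y i)` divides `p i · ord (x i)`. -/
theorem stmt_7 {ι : Type*} [Fintype ι] (p a : ι → ℕ)
    (hp : ∀ i, (p i).Prime) (ha : ∀ i, 1 ≤ a i)
    (y x : (i : ι) → ZMod (p i ^ a i))
    (hx : x ∈ AddSubgroup.zmultiples y) :
    ArithmeticFunction.moebius (addOrderOf y / addOrderOf x) ≠ 0 ↔
      ∀ i, addOrderOf (y i) ∣ p i * addOrderOf (x i) :=
  stmt_7_general p a hp y x hx
end

section
/- Let Z be a finite additive abelian group (with decidable equality), S a finite subset of Z with 0 ∉ S and such that −s ∈ S whenever s ∈ S, and let G = Cay(Z, S) be the simple graph on vertex set Z with a adjacent to b iff a ≠ b and b − a ∈ S. Then the characteristic polynomial of the adjacency matrix of G over ℂ equals ∏_{ψ} (X − λ_ψ), where the product runs over all additive characters ψ : Z → ℂ of Z and λ_ψ = ∑_{s ∈ S} ψ(s). In other words, the multiset of eigenvalues of Cay(Z, S) is { ∑_{s ∈ S} ψ(s) : ψ an additive character of Z }. -/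
/-- The Cayley graph `Cay(Z, S)` of a finite abelian group `Z` with connection set `S`. -/
def cayleyGraph {Z : Type*} [AddCommGroup Z] [DecidableEq Z] (S : Finset Z)
    (hsym : ∀ s ∈ S, -s ∈ S) : SimpleGraph Z where
  Adj a b := a ≠ b ∧ b - a ∈ S
  symm := ⟨by
    rintro a b ⟨hne, hmem⟩
    exact ⟨hne.symm, by simpa using hsym _ hmem⟩⟩
  loopless := ⟨fun a h => h.1 rfl⟩

instance {Z : Type*} [AddCommGroup Z] [DecidableEq Z] (S : Finset Z)
    (hsym : ∀ s ∈ S, -s ∈ S) : DecidableRel (cayleyGraph S hsym).Adj :=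
  fun a b => inferInstanceAs (Decidable (a ≠ b ∧ b - a ∈ S))

open Polynomial in
/-- Babai's theorem: the characteristic polynomial of the adjacency matrix of `Cay(Z, S)`
is `∏_ψ (X - λ_ψ)` over the additive characters `ψ` of `Z`, where `λ_ψ = ∑_{s ∈ S} ψ s`. -/
theorem stmt_10 {Z : Type*} [AddCommGroup Z] [Fintype Z] [DecidableEq Z]
    (S : Finset Z) (h0 : (0 : Z) ∉ S) (hsym : ∀ s ∈ S, -s ∈ S) :
    (SimpleGraph.adjMatrix ℂ (cayleyGraph S hsym)).charpoly =
      ∏ ψ : AddChar Z ℂ, (X - C (∑ s ∈ S, ψ s)) := by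
  classical
  set M : Matrix Z Z ℂ := SimpleGraph.adjMatrix ℂ (cayleyGraph S hsym) with hM
  set f : (Z → ℂ) →ₗ[ℂ] (Z → ℂ) := Matrix.toLin' M with hf
  set b : Module.Basis (AddChar Z ℂ) ℂ (Z → ℂ) := AddChar.complexBasis Z
  set lam : AddChar Z ℂ → ℂ := fun ψ => ∑ s ∈ S, ψ s with hlam
  -- the eigenvector property
  have hev : ∀ ψ : AddChar Z ℂ, f (b ψ) = lam ψ • b ψ := by
    intro ψ
    funext a
    have hcoe : (b ψ : Z → ℂ) = ⇑ψ := AddChar.complexBasis_apply ψ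
    have : f (b ψ) a = ∑ u ∈ (cayleyGraph S hsym).neighborFinset a, ψ u := by
      simp [hf, Matrix.toLin'_apply, hM, hcoe]
    rw [this]
    have himg : (cayleyGraph S hsym).neighborFinset a = S.image (fun s => a + s) := by
      ext u
      simp only [SimpleGraph.mem_neighborFinset, Finset.mem_image]; simp only [cayleyGraph]
      constructor
      · rintro ⟨hne, hmem⟩
        exact ⟨u - a, hmem, by abel⟩
      · rintro ⟨s, hs, rfl⟩
        refine ⟨fun h => h0 ?_, by simp [hs]⟩
        have hz : s = 0 := left_eq_add.mp h
        exact hz ▸ hs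
    rw [himg, Finset.sum_image (fun x _ y _ h => by simpa using h)]
    simp only [AddChar.map_add_eq_mul, Pi.smul_apply, hcoe, smul_eq_mul, ← Finset.mul_sum, hlam]
    ring
  -- the matrix of f in the character basis is diagonal
  have hdiag : LinearMap.toMatrix b b f = Matrix.diagonal lam := by
    ext ψ' ψ
    rw [LinearMap.toMatrix_apply, hev ψ, map_smul, Module.Basis.repr_self, Finsupp.smul_single,
      smul_eq_mul, mul_one, Finsupp.single_apply, Matrix.diagonal_apply]
    by_cases h : ψ' = ψ
    · subst h; simp
    · simp [h, Ne.symm h]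
  have h1 : M.charpoly = f.charpoly := by
    rw [← LinearMap.charpoly_toMatrix f (Pi.basisFun ℂ Z), LinearMap.toMatrix_eq_toMatrix',
      hf, LinearMap.toMatrix'_toLin']
  rw [h1, ← LinearMap.charpoly_toMatrix f b, hdiag]
  rw [Matrix.charpoly]
  have hcm : Matrix.charmatrix (Matrix.diagonal lam) =
      Matrix.diagonal (fun ψ => X - C (lam ψ)) := by
    ext i j
    by_cases h : i = j
    · subst h; simp [Matrix.charmatrix_apply_eq]
    · simp [Matrix.charmatrix_apply_ne _ _ _ h, Matrix.diagonal_apply_ne _ h]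
  rw [hcm, Matrix.det_diagonal]
end

section
/- Let Z be a finite additive abelian group (with decidable equality), S a finite subset of Z with 0 ∉ S and such that −s ∈ S whenever s ∈ S, and let G = Cay(Z, S) be the simple graph on vertex set Z with a adjacent to b iff a ≠ b and b − a ∈ S. Then every root of the characteristic polynomial of the adjacency matrix of G over ℂ is an integer (i.e., lies in the image of ℤ in ℂ) if and only if S is a union of classes [x], i.e., for every x ∈ S and every y ∈ Z with ⟨y⟩ = ⟨x⟩ one has y ∈ S. -/
open Polynomial Finset Matrix

set_option linter.unusedSectionVars false
set_option maxHeartbeats 1000000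

section Helpers
variable {Z : Type*} [AddCommGroup Z] [Fintype Z] [DecidableEq Z]

variable {Z : Type*} [AddCommGroup Z] [Fintype Z] [DecidableEq Z]

lemma char_pow_card (ψ : AddChar Z ℂ) (s : Z) : ψ s ^ Fintype.card Z = 1 := by
  rw [← AddChar.map_nsmul_eq_pow, card_nsmul_eq_zero, AddChar.map_zero_eq_one]

lemma cayley_mulVec (S : Finset Z) (h0 : (0:Z) ∉ S) (hsym : ∀ s ∈ S, -s ∈ S)
    (ψ : AddChar Z ℂ) :
    (SimpleGraph.adjMatrix ℂ (cayleyGraph S hsym)) *ᵥ ⇑ψ = (∑ s ∈ S, ψ s) • ⇑ψ := by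
  funext a
  rw [SimpleGraph.adjMatrix_mulVec_apply]
  have hnb : (cayleyGraph S hsym).neighborFinset a = S.image (fun s => a + s) := by
    ext b
    simp only [SimpleGraph.mem_neighborFinset, Finset.mem_image]
    show (a ≠ b ∧ b - a ∈ S) ↔ _
    constructor
    · rintro ⟨hne, hm⟩
      exact ⟨b - a, hm, by abel⟩
    · rintro ⟨s, hs, rfl⟩
      refine ⟨fun h => h0 ?_, by simpa using hs⟩
      have hs0 : s = 0 := by
        have := left_eq_add.mp h
        exact this
      exact hs0 ▸ hs
  rw [hnb, Finset.sum_image (fun x _ y _ h => by exact add_left_cancel h)]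
  simp only [AddChar.map_add_eq_mul, Pi.smul_apply, smul_eq_mul, Finset.sum_mul, Finset.mul_sum]
  exact Finset.sum_congr rfl fun s _ => mul_comm _ _

lemma cayley_charpoly_root_iff (S : Finset Z) (h0 : (0:Z) ∉ S) (hsym : ∀ s ∈ S, -s ∈ S)
    (z : ℂ) :
    (SimpleGraph.adjMatrix ℂ (cayleyGraph S hsym)).charpoly.IsRoot z ↔
      ∃ ψ : AddChar Z ℂ, z = ∑ s ∈ S, ψ s := by
  classical
  set A := SimpleGraph.adjMatrix ℂ (cayleyGraph S hsym) with hA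
  set b := AddChar.complexBasis Z with hb
  set f := Matrix.toLin (Pi.basisFun ℂ Z) (Pi.basisFun ℂ Z) A with hf
  have hAf : A = LinearMap.toMatrix (Pi.basisFun ℂ Z) (Pi.basisFun ℂ Z) f := by
    rw [hf, LinearMap.toMatrix_toLin]
  have hfap : ∀ ψ : AddChar Z ℂ, f ⇑ψ = (∑ s ∈ S, ψ s) • ⇑ψ := by
    intro ψ
    rw [hf, Matrix.toLin_eq_toLin', Matrix.toLin'_apply, cayley_mulVec S h0 hsym]
  have hD : LinearMap.toMatrix b b f
      = Matrix.diagonal (fun ψ : AddChar Z ℂ => ∑ s ∈ S, ψ s) := by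
    ext ψ χ
    rw [LinearMap.toMatrix_apply]
    have : f (b χ) = (∑ s ∈ S, χ s) • (b χ) := by
      rw [AddChar.complexBasis_apply]; exact hfap χ
    rw [this, _root_.map_smul, Module.Basis.repr_self, Matrix.diagonal_apply]
    rw [Finsupp.smul_single, Finsupp.single_apply]
    by_cases h : χ = ψ
    · subst h; simp
    · simp [h, Ne.symm h]
  have hcp : A.charpoly = ∏ ψ : AddChar Z ℂ, (X - C (∑ s ∈ S, ψ s)) := by
    rw [hAf, LinearMap.charpoly_toMatrix, ← LinearMap.charpoly_toMatrix f b, hD]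
    rw [Matrix.charpoly, Matrix.charmatrix, Matrix.scalar_apply, RingHom.mapMatrix_apply,
      Matrix.diagonal_map (map_zero C), Matrix.diagonal_sub, Matrix.det_diagonal]
  rw [hcp]
  simp only [IsRoot, eval_prod, Finset.prod_eq_zero_iff, eval_sub, eval_X, eval_C,
    Finset.mem_univ, true_and, sub_eq_zero]


variable {Z : Type*} [AddCommGroup Z] [Fintype Z]

lemma smul_eq_of_modEq {a b : ℕ} (h : a ≡ b [MOD Fintype.card Z]) (z : Z) : a • z = b • z := by
  rw [nsmul_eq_nsmul_iff_modEq]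
  exact h.of_dvd addOrderOf_dvd_card

lemma exists_inv_smul {k : ℕ} (hk : k.Coprime (Fintype.card Z)) :
    ∃ m : ℕ, m.Coprime (Fintype.card Z) ∧ ∀ z : Z, m • k • z = z := by
  have hn : 0 < Fintype.card Z := Fintype.card_pos
  haveI : NeZero (Fintype.card Z) := ⟨hn.ne'⟩
  set u : (ZMod (Fintype.card Z))ˣ := ZMod.unitOfCoprime k hk with hu
  refine ⟨(↑u⁻¹ : ZMod (Fintype.card Z)).val, ZMod.val_coe_unit_coprime u⁻¹, fun z => ?_⟩
  have hmod : (k * (↑u⁻¹ : ZMod (Fintype.card Z)).val) ≡ 1 [MOD Fintype.card Z] := by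
    have : ((k * (↑u⁻¹ : ZMod (Fintype.card Z)).val : ℕ) : ZMod (Fintype.card Z))
        = ((1 : ℕ) : ZMod (Fintype.card Z)) := by
      push_cast
      simp only [ZMod.natCast_val, ZMod.cast_id]
      rw [show ((k : ℕ) : ZMod (Fintype.card Z)) = ↑u from (ZMod.coe_unitOfCoprime k hk).symm]
      simp
    exact (ZMod.natCast_eq_natCast_iff _ _ _).mp this
  rw [← mul_nsmul]
  rw [smul_eq_of_modEq hmod, one_nsmul]

lemma classcond_iff (S : Finset Z) :
    (∀ x ∈ S, ∀ y : Z, AddSubgroup.zmultiples y = AddSubgroup.zmultiples x → y ∈ S) ↔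
    (∀ k : ℕ, k.Coprime (Fintype.card Z) → ∀ x ∈ S, k • x ∈ S) := by
  have hn : 0 < Fintype.card Z := Fintype.card_pos
  haveI : NeZero (Fintype.card Z) := ⟨hn.ne'⟩
  constructor
  · intro h k hk x hx
    obtain ⟨m, hm, hinv⟩ := exists_inv_smul (Z := Z) hk
    refine h x hx (k • x) (le_antisymm ?_ ?_)
    · rw [AddSubgroup.zmultiples_le]
      exact AddSubgroup.mem_zmultiples_iff.mpr ⟨(k : ℤ), by rw [natCast_zsmul]⟩
    · rw [AddSubgroup.zmultiples_le]
      exact AddSubgroup.mem_zmultiples_iff.mpr ⟨(m : ℤ), by rw [natCast_zsmul]; exact hinv x⟩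
  · intro h x hx y hy
    obtain ⟨a, ha⟩ : y ∈ AddSubgroup.zmultiples x := by
      rw [← hy]; exact AddSubgroup.mem_zmultiples y
    obtain ⟨c, hc⟩ : x ∈ AddSubgroup.zmultiples y := by
      rw [hy]; exact AddSubgroup.mem_zmultiples x
    change a • x = y at ha
    change c • y = x at hc
    set d := addOrderOf x with hd
    have hdn : d ∣ Fintype.card Z := addOrderOf_dvd_card
    have hca : ((d : ℤ)) ∣ (c * a - 1) := by
      rw [addOrderOf_dvd_iff_zsmul_eq_zero]
      have h1 : (c * a) • x = x := by rw [mul_zsmul, ha, hc]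
      rw [sub_zsmul, h1, one_zsmul]
      abel
    have hmul : ((a : ZMod d)) * ((c : ZMod d)) = 1 := by
      have h0 : (((c * a - 1 : ℤ)) : ZMod d) = 0 := by
        rw [ZMod.intCast_zmod_eq_zero_iff_dvd]; exact_mod_cast hca
      push_cast at h0
      linear_combination h0
    set ud : (ZMod d)ˣ := Units.mkOfMulEqOne _ _ hmul with hud
    obtain ⟨v, hv⟩ := ZMod.unitsMap_surjective hdn ud
    set k := (↑v : ZMod (Fintype.card Z)).val with hkdef
    have hk : k.Coprime (Fintype.card Z) := ZMod.val_coe_unit_coprime v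
    have hka : (((k : ℤ)) : ZMod d) = ((a : ℤ) : ZMod d) := by
      have h1 : ((k : ℕ) : ZMod (Fintype.card Z)) = ↑v := by
        simp [hkdef, ZMod.natCast_val, ZMod.cast_id]
      have h2 : (ZMod.castHom hdn (ZMod d)) ((k : ℕ) : ZMod (Fintype.card Z))
          = ((k : ℕ) : ZMod d) := map_natCast _ k
      have h3 : (ZMod.castHom hdn (ZMod d)) (↑v) = ↑(ZMod.unitsMap hdn v) := by
        simp [ZMod.unitsMap_def]
      rw [hv] at h3
      have : ((k : ℕ) : ZMod d) = ↑ud := by rw [← h2, h1, h3]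
      have hud' : (↑ud : ZMod d) = ((a : ℤ) : ZMod d) := by
        simp [hud, Units.val_mkOfMulEqOne]
      push_cast
      rw [this, hud']
    have hdvd : ((d : ℤ)) ∣ ((k : ℤ) - a) := by
      rwa [← ZMod.intCast_zmod_eq_zero_iff_dvd, Int.cast_sub, sub_eq_zero]
    have hkx : (k : ℤ) • x = y := by
      have h0 : ((k : ℤ) - a) • x = 0 := by
        rw [← addOrderOf_dvd_iff_zsmul_eq_zero]; exact hdvd
      rw [sub_zsmul] at h0
      rw [add_neg_eq_zero.mp h0, ha]
    have := h k hk x hx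
    rwa [← natCast_zsmul, hkx] at this

lemma integral_iff_kinv (S : Finset Z) :
    (∀ ψ : AddChar Z ℂ, ∃ m : ℤ, ∑ s ∈ S, ψ s = m) ↔
    (∀ k : ℕ, k.Coprime (Fintype.card Z) → ∀ x ∈ S, k • x ∈ S) := by
  classical
  set n := Fintype.card Z with hndef
  have hn : 0 < n := Fintype.card_pos
  haveI : NeZero n := ⟨hn.ne'⟩
  set N : ℕ+ := ⟨n, hn⟩ with hNdef
  set K := CyclotomicField N ℚ with hKdef
  haveI : NeZero ((N : ℕ) : ℚ) := ⟨Nat.cast_ne_zero.mpr N.ne_zero⟩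
  haveI : IsCyclotomicExtension {(N : ℕ)} ℚ K :=
    CyclotomicField.isCyclotomicExtension (N : ℕ) ℚ
  set η : K := IsCyclotomicExtension.zeta N ℚ K with hetadef
  have hη : IsPrimitiveRoot η n := IsCyclotomicExtension.zeta_spec N ℚ K
  have hirr : Irreducible (cyclotomic (N : ℕ) ℚ) := cyclotomic.irreducible_rat N.pos
  set ζ : ℂ := Complex.exp (2 * Real.pi * Complex.I / n) with hzdef
  have hζ : IsPrimitiveRoot ζ n := Complex.isPrimitiveRoot_exp n hn.ne'
  have hηN : IsPrimitiveRoot η ((N : ℕ)) := hη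
  set E := hηN.embeddingsEquivPrimitiveRoots ℂ hirr with hEdef
  -- exponents
  have hroot : ∀ (ψ : AddChar Z ℂ) (s : Z), ∃ i : ℕ, ζ ^ i = ψ s := by
    intro ψ s
    obtain ⟨i, _, hi⟩ := hζ.eq_pow_of_pow_eq_one (char_pow_card ψ s)
    exact ⟨i, hi⟩
  choose j hj using hroot
  -- embeddings produce coprime powers
  have hφ : ∀ τ : K →ₐ[ℚ] ℂ, ∃ k : ℕ, k.Coprime n ∧ τ η = ζ ^ k := by
    intro τ
    have hmem : τ η ∈ primitiveRoots n ℂ := by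
      have := (E τ).2
      rwa [IsPrimitiveRoot.embeddingsEquivPrimitiveRoots_apply_coe] at this
    have hprim : IsPrimitiveRoot (τ η) n := (mem_primitiveRoots hn).mp hmem
    obtain ⟨k, _, hk⟩ := hζ.eq_pow_of_pow_eq_one hprim.pow_eq_one
    refine ⟨k, ?_, hk.symm⟩
    exact (hζ.pow_iff_coprime hn k).mp (hk ▸ hprim)
  -- existence of embeddings with prescribed image
  have hsurj : ∀ k : ℕ, k.Coprime n → ∃ τ : K →ₐ[ℚ] ℂ, τ η = ζ ^ k := by
    intro k hk
    have hprim : IsPrimitiveRoot (ζ ^ k) n := (hζ.pow_iff_coprime hn k).mpr hk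
    refine ⟨E.symm ⟨ζ ^ k, (mem_primitiveRoots hn).mpr hprim⟩, ?_⟩
    have := E.apply_symm_apply ⟨ζ ^ k, (mem_primitiveRoots hn).mpr hprim⟩
    have h2 := congrArg Subtype.val this
    rwa [IsPrimitiveRoot.embeddingsEquivPrimitiveRoots_apply_coe] at h2
  -- evaluation of embeddings on the lifted sums
  have hτu : ∀ (τ : K →ₐ[ℚ] ℂ) (k : ℕ), τ η = ζ ^ k → ∀ ψ : AddChar Z ℂ,
      τ (∑ s ∈ S, η ^ (j ψ s)) = ∑ s ∈ S, ψ (k • s) := by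
    intro τ k hτ ψ
    rw [map_sum]
    refine Finset.sum_congr rfl fun s _ => ?_
    rw [map_pow, hτ, ← pow_mul, mul_comm k (j ψ s), pow_mul, hj, AddChar.map_nsmul_eq_pow]
  obtain ⟨φζ, hφζ⟩ := hsurj 1 (Nat.coprime_one_left n)
  rw [pow_one] at hφζ
  have hφζu : ∀ ψ : AddChar Z ℂ, φζ (∑ s ∈ S, η ^ (j ψ s)) = ∑ s ∈ S, ψ s := by
    intro ψ
    have := hτu φζ 1 (by rw [pow_one, hφζ]) ψ
    simpa using this
  have hinj : Function.Injective φζ := φζ.toRingHom.injective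
  constructor
  · -- integrality → invariance
    intro hint k hk x hx
    obtain ⟨m, hm, hminv⟩ := exists_inv_smul (Z := Z) hk
    have hkinj : Function.Injective (fun z : Z => k • z) := by
      intro z w h
      have := congrArg (fun t => m • t) h
      simpa [hminv] using this
    set T := S.image (fun s => k • s) with hTdef
    have hsum : ∀ ψ : AddChar Z ℂ, ∑ t ∈ T, ψ t = ∑ s ∈ S, ψ s := by
      intro ψ
      obtain ⟨m0, hm0⟩ := hint ψ
      have hu : (∑ s ∈ S, η ^ (j ψ s)) = (m0 : K) := by
        apply hinj
        rw [hφζu ψ, map_intCast, hm0]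
      obtain ⟨τ, hτ⟩ := hsurj k hk
      have h1 : τ (∑ s ∈ S, η ^ (j ψ s)) = ∑ s ∈ S, ψ (k • s) := hτu τ k hτ ψ
      rw [hu, map_intCast] at h1
      rw [hTdef, Finset.sum_image (fun a _ b _ h => hkinj h), ← h1, ← hm0]
    -- linear functional argument
    set g : Z → ℂ := fun z => (if z ∈ T then (1:ℂ) else 0) - (if z ∈ S then (1:ℂ) else 0)
      with hgdef
    set L : (Z → ℂ) →ₗ[ℂ] ℂ :=
      { toFun := fun h => ∑ z, g z * h z
        map_add' := by
          intro h1 h2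
          simp only [Pi.add_apply, mul_add]
          rw [Finset.sum_add_distrib]
        map_smul' := by
          intro c h
          simp only [Pi.smul_apply, smul_eq_mul, RingHom.id_apply, Finset.mul_sum]
          exact Finset.sum_congr rfl fun z _ => by ring } with hLdef
    have hL0 : L = 0 := by
      apply (AddChar.complexBasis Z).ext
      intro ψ
      rw [AddChar.complexBasis_apply]
      show (∑ z, g z * ψ z) = (0 : (Z → ℂ) →ₗ[ℂ] ℂ) ⇑ψ
      simp only [LinearMap.zero_apply]
      simp only [hgdef, sub_mul, ite_mul, one_mul, zero_mul]
      rw [Finset.sum_sub_distrib]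
      rw [Finset.sum_ite_mem, Finset.sum_ite_mem, Finset.univ_inter, Finset.univ_inter,
        hsum ψ, sub_self]
    have hg : ∀ z : Z, g z = 0 := by
      intro z
      have h2 : L (Pi.single z (1:ℂ)) = 0 := by rw [hL0]; rfl
      have h3 : L (Pi.single z (1:ℂ)) = g z := by
        have hLs : L (Pi.single z (1:ℂ)) = ∑ w : Z, g w * (Pi.single z (1:ℂ) : Z → ℂ) w := rfl
        rw [hLs, Finset.sum_eq_single z]
        · simp
        · intro w _ hw; simp [Pi.single_eq_of_ne hw]
        · intro h; exact absurd (Finset.mem_univ z) h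
      rw [h3] at h2
      exact h2
    have hgx := hg (k • x)
    have hT : k • x ∈ T := Finset.mem_image_of_mem _ hx
    rw [hgdef] at hgx
    simp only [hT, if_true] at hgx
    by_contra hS
    simp only [hS, if_false] at hgx
    norm_num at hgx
  · -- invariance → integrality
    intro hKinv ψ
    set u : K := ∑ s ∈ S, η ^ (j ψ s) with hudef
    have hre : ∀ k : ℕ, k.Coprime n → ∑ s ∈ S, ψ (k • s) = ∑ s ∈ S, ψ s := by
      intro k hk
      obtain ⟨m, hm, hminv⟩ := exists_inv_smul (Z := Z) hk
      refine Finset.sum_nbij' (fun s => k • s) (fun s => m • s) ?_ ?_ ?_ ?_ ?_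
      · intro a ha; exact hKinv k hk a ha
      · intro a ha; exact hKinv m hm a ha
      · intro a _; exact hminv a
      · intro a _
        show k • m • a = a
        rw [smul_comm]
        exact hminv a
      · intro a _; rfl
    have hfix : ∀ σ : K ≃ₐ[ℚ] K, σ u = u := by
      intro σ
      obtain ⟨k, hk, hτ⟩ := hφ (φζ.comp σ.toAlgHom)
      apply hinj
      have h1 : φζ (σ u) = ∑ s ∈ S, ψ (k • s) := by
        have := hτu (φζ.comp σ.toAlgHom) k hτ ψ
        simpa [hudef] using this
      rw [h1, hre k hk, hφζu ψ]
    haveI hGal : IsGalois ℚ K := IsCyclotomicExtension.isGalois {(N : ℕ)} ℚ K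
    haveI : FiniteDimensional ℚ K := IsCyclotomicExtension.finiteDimensional {(N : ℕ)} ℚ K
    have hbot : u ∈ (⊥ : IntermediateField ℚ K) := by
      rw [← IsGalois.fixedField_fixingSubgroup (⊥ : IntermediateField ℚ K)]
      rintro ⟨σ, hσ⟩
      exact hfix σ
    obtain ⟨q, hq⟩ := IntermediateField.mem_bot.mp hbot
    have hint : IsIntegral ℤ u := by
      apply IsIntegral.sum
      intro s _
      exact (hη.isIntegral hn).pow _
    have hqint : IsIntegral ℤ q := by
      rw [← isIntegral_algebraMap_iff (algebraMap ℚ K).injective]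
      rwa [hq]
    obtain ⟨m, hm⟩ := IsIntegrallyClosed.isIntegral_iff.mp hqint
    refine ⟨m, ?_⟩
    have : φζ u = ∑ s ∈ S, ψ s := hφζu ψ
    rw [← this, ← hq, AlgHom.commutes, ← hm]
    simp

end Helpers

/-- Bridges–Mena characterization: `Cay(Z, S)` is integral (every eigenvalue of its adjacency
matrix is an integer) iff `S` is a union of the classes `[x] = {y : ⟨y⟩ = ⟨x⟩}`. -/
theorem stmt_12 {Z : Type*} [AddCommGroup Z] [Fintype Z] [DecidableEq Z]
    (S : Finset Z) (h0 : (0 : Z) ∉ S) (hsym : ∀ s ∈ S, -s ∈ S) :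
    (∀ z : ℂ, (SimpleGraph.adjMatrix ℂ (cayleyGraph S hsym)).charpoly.IsRoot z →
        ∃ n : ℤ, z = n) ↔
      ∀ x ∈ S, ∀ y : Z,
        AddSubgroup.zmultiples y = AddSubgroup.zmultiples x → y ∈ S := by
  have hiff : (∀ z : ℂ, (SimpleGraph.adjMatrix ℂ (cayleyGraph S hsym)).charpoly.IsRoot z →
        ∃ n : ℤ, z = n) ↔
      (∀ ψ : AddChar Z ℂ, ∃ m : ℤ, ∑ s ∈ S, ψ s = m) := by
    constructor
    · intro h ψ
      obtain ⟨m, hm⟩ := h (∑ s ∈ S, ψ s) ((cayley_charpoly_root_iff S h0 hsym _).mpr ⟨ψ, rfl⟩)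
      exact ⟨m, hm⟩
    · intro h z hz
      obtain ⟨ψ, rfl⟩ := (cayley_charpoly_root_iff S h0 hsym z).mp hz
      obtain ⟨m, hm⟩ := h ψ
      exact ⟨m, hm⟩
  rw [hiff, integral_iff_kinv]
  exact (classcond_iff S).symm
end

section
/- Let Z be a finite additive abelian group, ψ : Z → ℂ an additive character, and x ∈ Z. Then the sum C_ψ(x) = ∑_{s ∈ [x]} ψ(s) is an integer: there exists n ∈ ℤ with ∑_{s ∈ [x]} ψ(s) = n. -/
open scoped Classical

/-- The full subgroup sum is an integer. -/
lemma my_sub_sum {Z : Type*} [AddCommGroup Z] [Fintype Z]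
    (ψ : Z → ℂ) (hψadd : ∀ a b : Z, ψ (a + b) = ψ a * ψ b) (x : Z) :
    (∑ s ∈ Finset.univ.filter (fun y : Z => y ∈ AddSubgroup.zmultiples x), ψ s)
      ∈ (Int.castRingHom ℂ).range := by
  by_cases h : ∀ y ∈ AddSubgroup.zmultiples x, ψ y = 1
  · refine ⟨(Finset.univ.filter (fun y : Z => y ∈ AddSubgroup.zmultiples x)).card, ?_⟩
    rw [Finset.sum_congr rfl (fun y hy => h y (Finset.mem_filter.mp hy).2)]
    simp
  · push_neg at h
    obtain ⟨y0, hy0, hy0'⟩ := h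
    have key : (∑ s ∈ Finset.univ.filter (fun y : Z => y ∈ AddSubgroup.zmultiples x), ψ s)
        = (∑ s ∈ Finset.univ.filter (fun y : Z => y ∈ AddSubgroup.zmultiples x), ψ s) * ψ y0 := by
      rw [Finset.sum_mul]
      refine Finset.sum_nbij' (fun s => s - y0) (fun s => s + y0) ?_ ?_ ?_ ?_ ?_
      · intro a ha
        simp only [Finset.mem_filter, Finset.mem_univ, true_and] at ha ⊢
        exact AddSubgroup.sub_mem _ ha hy0
      · intro a ha
        simp only [Finset.mem_filter, Finset.mem_univ, true_and] at ha ⊢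
        exact AddSubgroup.add_mem _ ha hy0
      · intro a _; simp
      · intro a _; simp
      · intro a _; rw [← hψadd, sub_add_cancel]
    have hne : (1 : ℂ) - ψ y0 ≠ 0 := fun h => hy0' (by linear_combination -h)
    have h2 : (∑ s ∈ Finset.univ.filter (fun y : Z => y ∈ AddSubgroup.zmultiples x), ψ s)
        * (1 - ψ y0) = 0 := by rw [mul_one_sub, ← key, sub_self]
    exact ⟨0, by rw [(mul_eq_zero.mp h2).resolve_right hne]; simp⟩

lemma my_main {Z : Type*} [AddCommGroup Z] [Fintype Z]
    (ψ : Z → ℂ) (hψadd : ∀ a b : Z, ψ (a + b) = ψ a * ψ b) :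
    ∀ n : ℕ, ∀ x : Z, addOrderOf x = n →
    (∑ s ∈ Finset.univ.filter
        (fun y : Z => AddSubgroup.zmultiples y = AddSubgroup.zmultiples x), ψ s)
      ∈ (Int.castRingHom ℂ).range := by
  intro n
  induction n using Nat.strong_induction_on with
  | _ n ih =>
  intro x hx
  set S := Finset.univ.filter
      (fun y : Z => AddSubgroup.zmultiples y = AddSubgroup.zmultiples x) with hS
  set T := Finset.univ.filter (fun y : Z => y ∈ AddSubgroup.zmultiples x) with hT
  have hST : S ⊆ T := by
    intro y hy
    simp only [hS, hT, Finset.mem_filter, Finset.mem_univ, true_and] at hy ⊢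
    rw [← hy]; exact AddSubgroup.mem_zmultiples y
  have hsplit : ∑ s ∈ S, ψ s = (∑ s ∈ T, ψ s) - ∑ s ∈ T \ S, ψ s := by
    rw [eq_sub_iff_add_eq, Finset.sum_sdiff_eq_sub hST]
    ring
  rw [hsplit]
  refine Subring.sub_mem _ (my_sub_sum ψ hψadd x) ?_
  have hfib : ∑ s ∈ T \ S, ψ s =
      ∑ H ∈ (T \ S).image (fun y => AddSubgroup.zmultiples y),
        ∑ s ∈ (T \ S).filter (fun y => AddSubgroup.zmultiples y = H), ψ s :=
    (Finset.sum_fiberwise_of_maps_to (fun y hy => Finset.mem_image_of_mem _ hy) ψ).symm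
  rw [hfib]
  refine Subring.sum_mem _ ?_
  intro H hH
  obtain ⟨z, hz, rfl⟩ := Finset.mem_image.mp hH
  simp only [hT, hS, Finset.mem_sdiff, Finset.mem_filter, Finset.mem_univ, true_and] at hz
  obtain ⟨hz1, hz2⟩ := hz
  have hle : AddSubgroup.zmultiples z ≤ AddSubgroup.zmultiples x :=
    AddSubgroup.zmultiples_le.mpr hz1
  have hfilter : (T \ S).filter (fun y => AddSubgroup.zmultiples y = AddSubgroup.zmultiples z)
      = Finset.univ.filter (fun y : Z => AddSubgroup.zmultiples y = AddSubgroup.zmultiples z) := by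
    ext y
    simp only [hT, hS, Finset.mem_sdiff, Finset.mem_filter, Finset.mem_univ, true_and]
    constructor
    · rintro ⟨_, h⟩; exact h
    · intro h
      refine ⟨⟨?_, ?_⟩, h⟩
      · exact hle (h ▸ AddSubgroup.mem_zmultiples y)
      · rw [h]; exact hz2
  rw [hfilter]
  refine ih (addOrderOf z) ?_ z rfl
  have hlt : AddSubgroup.zmultiples z < AddSubgroup.zmultiples x := lt_of_le_of_ne hle hz2
  have hcard : Nat.card (AddSubgroup.zmultiples z) < Nat.card (AddSubgroup.zmultiples x) := by
    rw [← SetLike.coe_sort_coe, ← SetLike.coe_sort_coe,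
      Nat.card_coe_set_eq, Nat.card_coe_set_eq]
    exact Set.ncard_lt_ncard hlt (Set.toFinite _)
  rwa [Nat.card_zmultiples, Nat.card_zmultiples, hx] at hcard

/-- For an additive character `ψ` of a finite abelian group `Z` and `x ∈ Z`, the sum
`C_ψ(x) = ∑_{s ∈ [x]} ψ s` is an integer. -/
theorem stmt_13 {Z : Type*} [AddCommGroup Z] [Fintype Z]
    (ψ : Z → ℂ) (hψ0 : ψ 0 = 1) (hψadd : ∀ a b : Z, ψ (a + b) = ψ a * ψ b) (x : Z) :
    ∃ n : ℤ,
      ∑ s ∈ Finset.univ.filter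
          (fun y : Z => AddSubgroup.zmultiples y = AddSubgroup.zmultiples x), ψ s = n := by
  obtain ⟨n, hn⟩ := my_main ψ hψadd (addOrderOf x) x rfl
  exact ⟨n, hn.symm⟩
end

section
/- Let n be a positive integer, a a natural number, and g = gcd(n, a). Then φ(n/g) · ∑_{1 ≤ s ≤ n, gcd(s, n) = 1} exp(2πi·s·a/n) = μ(n/g) · φ(n) (an identity in ℂ), where μ is the classical Möbius function and φ is Euler's totient function. That is, the Ramanujan sum R_n(a) = ∑_{s coprime to n} e^{2πi s a / n} equals φ(n) · μ(n/g) / φ(n/g). -/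
open Finset ArithmeticFunction Complex

lemma geomsum (m a : ℕ) (hm : 0 < m) :
    ∑ t ∈ Finset.Icc 1 m, Complex.exp (2 * Real.pi * Complex.I * t * a / m) =
      if m ∣ a then (m : ℂ) else 0 := by
  have hmc : (m : ℂ) ≠ 0 := Nat.cast_ne_zero.mpr hm.ne'
  set z : ℂ := Complex.exp (2 * Real.pi * Complex.I * a / m) with hz
  have hpow : ∀ t : ℕ, Complex.exp (2 * Real.pi * Complex.I * t * a / m) = z ^ t := by
    intro t
    rw [hz, ← Complex.exp_nat_mul]
    ring_nf
  have hzm : z ^ m = 1 := by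
    rw [hz, ← Complex.exp_nat_mul]
    have : (m : ℂ) * (2 * Real.pi * Complex.I * a / m) = (a : ℤ) * (2 * Real.pi * Complex.I) := by
      push_cast; field_simp
    rw [this, Complex.exp_int_mul_two_pi_mul_I]
  simp_rw [hpow]
  by_cases hd : m ∣ a
  · rw [if_pos hd]
    obtain ⟨b, rfl⟩ := hd
    have hone : z = 1 := by
      rw [hz]
      have : 2 * Real.pi * Complex.I * (m * b : ℕ) / m = (b : ℤ) * (2 * Real.pi * Complex.I) := by
        push_cast; field_simp
      rw [this, Complex.exp_int_mul_two_pi_mul_I]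
    simp [hone, Nat.card_Icc]
  · rw [if_neg hd]
    have h2 : (2 * Real.pi * Complex.I : ℂ) ≠ 0 := by
      simp [Real.pi_ne_zero, Complex.I_ne_zero]
    have hz1 : z ≠ 1 := by
      intro h
      rw [hz, Complex.exp_eq_one_iff] at h
      obtain ⟨k, hk⟩ := h
      apply hd
      have h3 : (2 * Real.pi * Complex.I) * (a : ℂ) = (2 * Real.pi * Complex.I) * ((k : ℂ) * m) := by
        field_simp at hk
        linear_combination (2 * Real.pi * Complex.I) * hk
      have h4 : (a : ℂ) = (k : ℂ) * m := mul_left_cancel₀ h2 h3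
      have h5 : (a : ℤ) = k * m := by exact_mod_cast h4
      have : (m : ℤ) ∣ (a : ℤ) := ⟨k, by linarith⟩
      exact_mod_cast this
    have hshift : ∑ t ∈ Finset.Icc 1 m, z ^ t = z * ∑ i ∈ Finset.range m, z ^ i := by
      rw [← Finset.Ico_add_one_right_eq_Icc, Finset.sum_Ico_eq_sum_range, Finset.mul_sum]
      refine Finset.sum_congr (by simp) fun i _ => by rw [pow_add, pow_one]
    rw [hshift, geom_sum_eq hz1, hzm]
    simp
noncomputable def fmAux (m : ℕ) : ArithmeticFunction ℤ :=
  ⟨fun d => if Nat.Coprime d m then moebius d else 0, by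
    by_cases h : Nat.Coprime 0 m <;> simp [h]⟩

@[simp] lemma fmAux_apply (m d : ℕ) :
    fmAux m d = if Nat.Coprime d m then moebius d else 0 := rfl

lemma fmAux_mult (m : ℕ) : (fmAux m).IsMultiplicative := by
  constructor
  · simp [Nat.coprime_one_left]
  · intro x y hxy
    rw [fmAux_apply, fmAux_apply, fmAux_apply, ite_zero_mul_ite_zero]
    simp only [Nat.coprime_mul_iff_left, isMultiplicative_moebius.map_mul_of_coprime hxy]

noncomputable def Tfun (m : ℕ) : ArithmeticFunction ℤ :=
  fmAux m * ((ArithmeticFunction.id : ArithmeticFunction ℕ) : ArithmeticFunction ℤ)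

lemma Tfun_apply (m g : ℕ) :
    Tfun m g = ∑ d ∈ g.divisors, fmAux m d * ((g / d : ℕ) : ℤ) := by
  rw [Tfun, mul_apply, Nat.sum_divisorsAntidiagonal
    (fun x y => fmAux m x *
      (((ArithmeticFunction.id : ArithmeticFunction ℕ) : ArithmeticFunction ℤ)) y)]
  simp

lemma Tfun_mult (m : ℕ) : (Tfun m).IsMultiplicative :=
  (fmAux_mult m).mul (isMultiplicative_id.natCast)

lemma totpow {p : ℕ} (hp : p.Prime) {m : ℕ} (hpm : p ∣ m) (k : ℕ) :
    Nat.totient (m * p ^ k) = p ^ k * Nat.totient m := by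
  induction k with
  | zero => simp
  | succ k ih =>
      have h1 : m * p ^ (k + 1) = p * (m * p ^ k) := by ring
      have h2 : p ∣ m * p ^ k := hpm.mul_right _
      rw [h1, Nat.totient_mul_of_prime_of_dvd hp h2, ih]
      ring

lemma Tfun_pp {p : ℕ} (hp : p.Prime) {k : ℕ} (hk : 0 < k) (m : ℕ) :
    Tfun m (p ^ k) =
      (p : ℤ) ^ k + (if Nat.Coprime p m then -(p : ℤ) ^ (k - 1) else 0) := by
  rw [Tfun_apply, Nat.sum_divisors_prime_pow hp]
  have hsub : ∑ i ∈ range (k + 1), fmAux m (p ^ i) * (((p ^ k) / (p ^ i) : ℕ) : ℤ) =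
      ∑ i ∈ range 2, fmAux m (p ^ i) * (((p ^ k) / (p ^ i) : ℕ) : ℤ) := by
    refine (Finset.sum_subset (Finset.range_subset_range.2 (by omega)) fun i _ hi => ?_).symm
    have hi2 : 2 ≤ i := by simp at hi; omega
    have : moebius (p ^ i) = 0 := by
      rw [moebius_apply_prime_pow hp (by omega)]
      simp [show i ≠ 1 by omega]
    by_cases h : Nat.Coprime (p ^ i) m <;> simp [h, this]
  rw [hsub, Finset.sum_range_succ, Finset.sum_range_one]
  have h0 : fmAux m (p ^ 0) * (((p ^ k) / (p ^ 0) : ℕ) : ℤ) = (p : ℤ) ^ k := by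
    simp [Nat.coprime_one_left]
  have hdiv : ((p ^ k) / (p ^ 1) : ℕ) = p ^ (k - 1) := by
    rw [Nat.pow_div hk hp.pos]
  have h1 : fmAux m (p ^ 1) * (((p ^ k) / (p ^ 1) : ℕ) : ℤ) =
      (if Nat.Coprime p m then -(p : ℤ) ^ (k - 1) else 0) := by
    rw [hdiv]
    by_cases h : Nat.Coprime p m <;>
      simp [pow_one, h, moebius_apply_prime hp]
  rw [h0, h1]

lemma keyL : ∀ g m : ℕ, 0 < m →
    (Nat.totient m : ℤ) * Tfun m g = (Nat.totient (m * g) : ℤ) := by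
  intro g
  induction g using Nat.recOnPosPrimePosCoprime with
  | zero => intro m hm; simp
  | one => intro m hm; simp [(Tfun_mult m).map_one]
  | prime_pow p k hp hk =>
      intro m hm
      obtain ⟨j, rfl⟩ : ∃ j, k = j + 1 := ⟨k - 1, by omega⟩
      rw [Tfun_pp hp (by omega) m]
      simp only [Nat.add_sub_cancel]
      by_cases hc : Nat.Coprime p m
      · have hcm : Nat.Coprime m (p ^ (j + 1)) := Nat.Coprime.pow_right (j + 1) hc.symm
        rw [if_pos hc, Nat.totient_mul hcm, Nat.totient_prime_pow hp (by omega)]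
        simp only [Nat.add_sub_cancel]
        push_cast [Nat.cast_sub hp.one_le]
        ring
      · have hpm : p ∣ m := by
          by_contra hnd
          exact hc ((Nat.Prime.coprime_iff_not_dvd hp).mpr hnd)
        rw [if_neg hc, totpow hp hpm (j + 1)]
        push_cast
        ring
  | coprime a b ha hb hab iha ihb =>
      intro m hm
      have hmul : Tfun m (a * b) = Tfun m a * Tfun m b :=
        (Tfun_mult m).map_mul_of_coprime hab
      have hTb : Tfun m b = Tfun (m * a) b := by
        rw [Tfun_apply, Tfun_apply]
        refine Finset.sum_congr rfl fun d hd => ?_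
        have hdb : d ∣ b := (Nat.mem_divisors.mp hd).1
        have hda : Nat.Coprime d a := Nat.Coprime.coprime_dvd_left hdb hab.symm
        have hiff : d.Coprime (m * a) ↔ d.Coprime m := by
          rw [Nat.coprime_mul_iff_right]
          exact ⟨fun h => h.1, fun h => ⟨h, hda⟩⟩
        simp only [fmAux_apply, hiff]
      calc (Nat.totient m : ℤ) * Tfun m (a * b)
          = ((Nat.totient m : ℤ) * Tfun m a) * Tfun m b := by rw [hmul]; ring
        _ = (Nat.totient (m * a) : ℤ) * Tfun (m * a) b := by
            rw [iha m hm, hTb]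
        _ = (Nat.totient (m * a * b) : ℤ) := ihb (m * a) (by positivity)
        _ = (Nat.totient (m * (a * b)) : ℤ) := by rw [mul_assoc]

lemma S_eq (n : ℕ) (hn : 0 < n) (a : ℕ) :
    (∑ e ∈ (Nat.gcd n a).divisors, moebius (n / e) * (e : ℤ)) =
      moebius (n / Nat.gcd n a) * Tfun (n / Nat.gcd n a) (Nat.gcd n a) := by
  set g := Nat.gcd n a with hg
  set m := n / g with hm
  have hgn : g ∣ n := Nat.gcd_dvd_left n a
  have hg0 : 0 < g := Nat.gcd_pos_of_pos_left a hn
  have hmg : m * g = n := Nat.div_mul_cancel hgn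
  have hm0 : 0 < m := Nat.div_pos (Nat.le_of_dvd hn hgn) hg0
  have hT : Tfun m g = ∑ e ∈ g.divisors, fmAux m (g / e) * ((g / (g / e) : ℕ) : ℤ) := by
    rw [Tfun_apply]
    exact (Nat.sum_div_divisors g (fun d => fmAux m d * ((g / d : ℕ) : ℤ))).symm
  rw [hT, Finset.mul_sum]
  refine Finset.sum_congr rfl fun e he => ?_
  obtain ⟨heg, -⟩ := Nat.mem_divisors.mp he
  have he0 : 0 < e := Nat.pos_of_dvd_of_pos heg hg0
  have hdd : g / (g / e) = e := Nat.div_div_self heg hg0.ne'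
  have hne : n / e = m * (g / e) := by
    rw [← hmg, Nat.mul_div_assoc m heg]
  rw [hdd, hne]
  by_cases hc : Nat.Coprime (g / e) m
  · rw [fmAux_apply, if_pos hc, isMultiplicative_moebius.map_mul_of_coprime hc.symm]
    ring
  · have hnsq : ¬ Squarefree (m * (g / e)) := by
      intro hsq
      exact hc ((Nat.squarefree_mul_iff.mp hsq).1.symm)
    rw [fmAux_apply, if_neg hc, moebius_eq_zero_of_not_squarefree hnsq]
    ring

/-- Hölder's evaluation of the Ramanujan sum:
`φ(n/g) · R_n(a) = μ(n/g) · φ(n)` where `g = gcd(n, a)` and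
`R_n(a) = ∑_{1 ≤ s ≤ n, gcd(s,n)=1} exp(2πi·s·a/n)`. -/
theorem stmt_14 (n : ℕ) (hn : 0 < n) (a : ℕ) :
    (Nat.totient (n / Nat.gcd n a) : ℂ) *
        ∑ s ∈ (Finset.Icc 1 n).filter (fun s => Nat.gcd s n = 1),
          Complex.exp (2 * Real.pi * Complex.I * s * a / n) =
      (ArithmeticFunction.moebius (n / Nat.gcd n a) : ℂ) * (Nat.totient n : ℂ) := by
  set g := Nat.gcd n a with hg
  set m := n / g with hm
  have hgn : g ∣ n := Nat.gcd_dvd_left n a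
  have hg0 : 0 < g := Nat.gcd_pos_of_pos_left a hn
  have hmg : m * g = n := Nat.div_mul_cancel hgn
  have hm0 : 0 < m := Nat.div_pos (Nat.le_of_dvd hn hgn) hg0
  -- Möbius indicator
  have h_ind : ∀ k : ℕ, (∑ d ∈ k.divisors, ((moebius d : ℤ) : ℂ)) =
      if k = 1 then 1 else 0 := by
    intro k
    calc ∑ d ∈ k.divisors, ((moebius d : ℤ) : ℂ)
        = ((moebius : ArithmeticFunction ℂ) * zeta) k := by
          rw [ArithmeticFunction.coe_mul_zeta_apply]
          simp
      _ = (1 : ArithmeticFunction ℂ) k := by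
          rw [ArithmeticFunction.coe_moebius_mul_coe_zeta]
      _ = if k = 1 then 1 else 0 := ArithmeticFunction.one_apply
  have hR1 : ∑ s ∈ (Finset.Icc 1 n).filter (fun s => Nat.gcd s n = 1), Complex.exp (2 * Real.pi * Complex.I * s * a / n) =
      ∑ s ∈ Finset.Icc 1 n,
        (∑ d ∈ (Nat.gcd s n).divisors, ((moebius d : ℤ) : ℂ)) * Complex.exp (2 * Real.pi * Complex.I * s * a / n) := by
    rw [Finset.sum_filter]
    refine Finset.sum_congr rfl fun s hs => ?_
    rw [h_ind (Nat.gcd s n)]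
    by_cases h : Nat.gcd s n = 1 <;> simp [h]
  have hgcdset : ∀ s : ℕ, 0 < s →
      (Nat.gcd s n).divisors = n.divisors.filter (fun d => d ∣ s) := by
    intro s hs
    ext d
    simp only [Nat.mem_divisors, Finset.mem_filter]
    constructor
    · rintro ⟨hd, -⟩
      exact ⟨⟨hd.trans (Nat.gcd_dvd_right s n), hn.ne'⟩, hd.trans (Nat.gcd_dvd_left s n)⟩
    · rintro ⟨⟨hdn, -⟩, hds⟩
      exact ⟨Nat.dvd_gcd hds hdn, (Nat.gcd_pos_of_pos_right s hn).ne'⟩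
  have hR2 : ∑ s ∈ (Finset.Icc 1 n).filter (fun s => Nat.gcd s n = 1), Complex.exp (2 * Real.pi * Complex.I * s * a / n) =
      ∑ d ∈ n.divisors, ((moebius d : ℤ) : ℂ) *
        ∑ s ∈ (Finset.Icc 1 n).filter (fun s => d ∣ s), Complex.exp (2 * Real.pi * Complex.I * s * a / n) := by
    rw [hR1]
    have : ∀ s ∈ Finset.Icc 1 n,
        (∑ d ∈ (Nat.gcd s n).divisors, ((moebius d : ℤ) : ℂ)) * Complex.exp (2 * Real.pi * Complex.I * s * a / n) =
        ∑ d ∈ n.divisors, (if d ∣ s then ((moebius d : ℤ) : ℂ) else 0) * Complex.exp (2 * Real.pi * Complex.I * s * a / n) := by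
      intro s hs
      have hs0 : 0 < s := (Finset.mem_Icc.mp hs).1
      rw [hgcdset s hs0, Finset.sum_filter, Finset.sum_mul]
    rw [Finset.sum_congr rfl this, Finset.sum_comm]
    refine Finset.sum_congr rfl fun d _ => ?_
    rw [Finset.mul_sum, Finset.sum_filter]
    refine Finset.sum_congr rfl fun s _ => ?_
    by_cases h : d ∣ s <;> simp [h]
  have hinner : ∀ d ∈ n.divisors,
      ∑ s ∈ (Finset.Icc 1 n).filter (fun s => d ∣ s), Complex.exp (2 * Real.pi * Complex.I * s * a / n) =
        if (n / d) ∣ a then ((n / d : ℕ) : ℂ) else 0 := by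
    intro d hd
    obtain ⟨hdn, -⟩ := Nat.mem_divisors.mp hd
    have hd0 : 0 < d := Nat.pos_of_dvd_of_pos hdn hn
    have hnd0 : 0 < n / d := Nat.div_pos (Nat.le_of_dvd hn hdn) hd0
    have himg : (Finset.Icc 1 n).filter (fun s => d ∣ s) =
        (Finset.Icc 1 (n / d)).image (fun t => d * t) := by
      ext s
      simp only [Finset.mem_filter, Finset.mem_Icc, Finset.mem_image]
      constructor
      · rintro ⟨⟨h1, h2⟩, t, rfl⟩
        refine ⟨t, ⟨?_, ?_⟩, rfl⟩
        · rcases Nat.eq_zero_or_pos t with rfl | ht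
          · omega
          · exact ht
        · exact (Nat.le_div_iff_mul_le hd0).mpr (by rw [mul_comm]; exact h2)
      · rintro ⟨t, ⟨ht1, ht2⟩, rfl⟩
        have h1 : d * t ≤ n := by
          calc d * t ≤ d * (n / d) := Nat.mul_le_mul_left d ht2
            _ = n := Nat.mul_div_cancel' hdn
        exact ⟨⟨Nat.mul_pos hd0 ht1, h1⟩, ⟨t, rfl⟩⟩
    rw [himg, Finset.sum_image (fun x _ y _ h => by
      exact Nat.eq_of_mul_eq_mul_left hd0 h)]
    have hEdt : ∀ t : ℕ, Complex.exp (2 * Real.pi * Complex.I * (d * t : ℕ) * a / n) =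
        Complex.exp (2 * Real.pi * Complex.I * t * a / (n / d : ℕ)) := by
      intro t
      have hcast : (n : ℂ) = (d : ℂ) * ((n / d : ℕ) : ℂ) := by
        exact_mod_cast (Nat.mul_div_cancel' hdn).symm
      have hd0' : (d : ℂ) ≠ 0 := Nat.cast_ne_zero.mpr hd0.ne'
      have hnd0' : ((n / d : ℕ) : ℂ) ≠ 0 := Nat.cast_ne_zero.mpr hnd0.ne'
      have harg : 2 * (Real.pi : ℂ) * Complex.I * ((d * t : ℕ) : ℂ) * a / n =
          2 * Real.pi * Complex.I * t * a / ((n / d : ℕ) : ℂ) := by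
        rw [hcast]
        push_cast
        field_simp
      rw [harg]
    rw [Finset.sum_congr rfl (fun t _ => hEdt t)]
    exact geomsum (n / d) a hnd0
  have hR3 : ∑ s ∈ (Finset.Icc 1 n).filter (fun s => Nat.gcd s n = 1), Complex.exp (2 * Real.pi * Complex.I * s * a / n) =
      ∑ d ∈ n.divisors, ((moebius d : ℤ) : ℂ) *
        (if (n / d) ∣ a then ((n / d : ℕ) : ℂ) else 0) := by
    rw [hR2]
    exact Finset.sum_congr rfl fun d hd => by rw [hinner d hd]
  -- reindex d ↦ n / d
  have hR4 : ∑ s ∈ (Finset.Icc 1 n).filter (fun s => Nat.gcd s n = 1), Complex.exp (2 * Real.pi * Complex.I * s * a / n) =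
      ∑ e ∈ n.divisors, ((moebius (n / e) : ℤ) : ℂ) *
        (if e ∣ a then ((e : ℕ) : ℂ) else 0) := by
    rw [hR3]
    have := Nat.sum_div_divisors n
      (fun e => ((moebius (n / e) : ℤ) : ℂ) * (if e ∣ a then ((e : ℕ) : ℂ) else 0))
    rw [← this]
    refine Finset.sum_congr rfl fun d hd => ?_
    obtain ⟨hdn, -⟩ := Nat.mem_divisors.mp hd
    rw [Nat.div_div_self hdn hn.ne']
  have hgdiv : g.divisors = n.divisors.filter (fun e => e ∣ a) := by
    ext e
    simp only [Nat.mem_divisors, Finset.mem_filter, hg]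
    constructor
    · rintro ⟨he, -⟩
      exact ⟨⟨he.trans (Nat.gcd_dvd_left n a), hn.ne'⟩, he.trans (Nat.gcd_dvd_right n a)⟩
    · rintro ⟨⟨hen, -⟩, hea⟩
      exact ⟨Nat.dvd_gcd hen hea, hg0.ne'⟩
  have hR5 : ∑ s ∈ (Finset.Icc 1 n).filter (fun s => Nat.gcd s n = 1), Complex.exp (2 * Real.pi * Complex.I * s * a / n) =
      ((∑ e ∈ g.divisors, moebius (n / e) * (e : ℤ) : ℤ) : ℂ) := by
    rw [hR4, hgdiv, Finset.sum_filter]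
    push_cast
    refine Finset.sum_congr rfl fun e _ => ?_
    by_cases h : e ∣ a <;> simp [h]
  have hint : (Nat.totient m : ℤ) * (∑ e ∈ g.divisors, moebius (n / e) * (e : ℤ)) =
      moebius m * (Nat.totient n : ℤ) := by
    rw [S_eq n hn a, ← hg, ← hm]
    have hkey := keyL g m hm0
    rw [hmg] at hkey
    calc (Nat.totient m : ℤ) * (moebius m * Tfun m g)
        = moebius m * ((Nat.totient m : ℤ) * Tfun m g) := by ring
      _ = moebius m * (Nat.totient n : ℤ) := by rw [hkey]
  calc (Nat.totient m : ℂ) * ∑ s ∈ (Finset.Icc 1 n).filter (fun s => Nat.gcd s n = 1), Complex.exp (2 * Real.pi * Complex.I * s * a / n)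
      = (Nat.totient m : ℂ) * ((∑ e ∈ g.divisors, moebius (n / e) * (e : ℤ) : ℤ) : ℂ) := by
        rw [hR5]
    _ = (((Nat.totient m : ℤ) * (∑ e ∈ g.divisors, moebius (n / e) * (e : ℤ)) : ℤ) : ℂ) := by
        push_cast; ring
    _ = ((moebius m * (Nat.totient n : ℤ) : ℤ) : ℂ) := by rw [hint]
    _ = ((moebius m : ℤ) : ℂ) * (Nat.totient n : ℂ) := by push_cast; ring
end
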